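/- arXiv:2010.08258 — 3 statements merged into one kernel-verified Lean document; each statement's English description precedes it below -/
import Mathlib

section
/- Let (Ω, F) be a measurable space, let P and Q be probability measures on Ω, and let f: Ω → ℝ^m be a measurable function such that ‖f(ω)‖₂ ≤ C for all ω ∈ Ω. Then ‖∫ f dP − ∫ f dQ‖₂ ≤ C · √(2 · KL(Q‖P)). -/
open MeasureTheory
open scoped ENNReal Classical

/-- The Kullback–Leibler divergence `KL(Q‖P) = ∫ log (dQ/dP) dQ` when `Q ≪ P` (and the
log-likelihood ratio is integrable), and `+∞` otherwise. -/
noncomputable def klDivM {Ω : Type*} [MeasurableSpace Ω] (Q P : Measure Ω) : ℝ≥0∞ :=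
  if Q ≪ P ∧ Integrable (llr Q P) Q then ENNReal.ofReal (∫ ω, llr Q P ω ∂Q) else ⊤



private lemma aux_k_mono : MonotoneOn (fun x : ℝ => (x + 1) * Real.log x - 2 * (x - 1)) (Set.Ioi 0) := by
  have hderiv : ∀ x : ℝ, 0 < x →
      HasDerivAt (fun x : ℝ => (x + 1) * Real.log x - 2 * (x - 1))
        (1 * Real.log x + (x + 1) * x⁻¹ - 2 * 1) x := by
    intro x hx
    exact (((hasDerivAt_id x).add_const 1).mul (Real.hasDerivAt_log hx.ne')).sub
      (((hasDerivAt_id x).sub_const 1).const_mul 2)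
  refine monotoneOn_of_deriv_nonneg (convex_Ioi 0) ?_ ?_ ?_
  · exact fun x hx => ((hderiv x hx).continuousAt).continuousWithinAt
  · intro x hx
    rw [interior_Ioi] at hx
    exact (hderiv x hx).differentiableAt.differentiableWithinAt
  · intro x hx
    rw [interior_Ioi] at hx
    rw [(hderiv x hx).deriv]
    have h1 := Real.one_sub_inv_le_log_of_pos hx
    have h2 : (x + 1) * x⁻¹ = 1 + x⁻¹ := by rw [add_mul, mul_inv_cancel₀ (ne_of_gt hx), one_mul]
    linarith

private lemma aux_k_nonneg {x : ℝ} (hx : 1 ≤ x) :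
    0 ≤ (x + 1) * Real.log x - 2 * (x - 1) := by
  have := aux_k_mono (Set.mem_Ioi.mpr one_pos) (Set.mem_Ioi.mpr (lt_of_lt_of_le one_pos hx)) hx
  simpa using this

private lemma aux_k_nonpos {x : ℝ} (hx0 : 0 < x) (hx : x ≤ 1) :
    (x + 1) * Real.log x - 2 * (x - 1) ≤ 0 := by
  have := aux_k_mono (Set.mem_Ioi.mpr hx0) (Set.mem_Ioi.mpr one_pos) hx
  simpa using this

private lemma aux_h_deriv {x : ℝ} (hx : x ≠ 0) :
    HasDerivAt (fun x : ℝ => 2 * (x + 2) * (x * Real.log x - x + 1) - 3 * (x - 1) ^ 2)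
      (4 * ((x + 1) * Real.log x - 2 * (x - 1))) x := by
  have h1 : HasDerivAt (fun x : ℝ => 2 * (x + 2)) 2 x := by
    simpa using ((hasDerivAt_id x).add_const 2).const_mul 2
  have h2 : HasDerivAt (fun x : ℝ => x * Real.log x - x + 1) (Real.log x + 1 - 1) x :=
    ((Real.hasDerivAt_mul_log hx).sub (hasDerivAt_id x)).add_const 1
  have h3 : HasDerivAt (fun x : ℝ => 3 * (x - 1) ^ 2) (3 * (2 * (x - 1) ^ 1 * 1)) x :=
    (((hasDerivAt_id x).sub_const 1).pow 2).const_mul 3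
  have := ((h1.mul h2).sub h3)
  exact this.congr_deriv (by ring)

private lemma pointwise_pinsker {x : ℝ} (hx : 0 ≤ x) :
    3 * (x - 1) ^ 2 ≤ 2 * (x + 2) * (x * Real.log x - x + 1) := by
  set h : ℝ → ℝ := fun x => 2 * (x + 2) * (x * Real.log x - x + 1) - 3 * (x - 1) ^ 2 with hh
  have hcont : Continuous h := by
    have := Real.continuous_mul_log
    fun_prop
  have h1 : h 1 = 0 := by simp [hh]
  have key : 0 ≤ h x := by
    rcases le_or_gt x 1 with hx1 | hx1
    · have hanti : AntitoneOn h (Set.Icc 0 1) := by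
        refine antitoneOn_of_deriv_nonpos (convex_Icc 0 1) hcont.continuousOn ?_ ?_
        · intro y hy
          rw [interior_Icc] at hy
          exact (aux_h_deriv (ne_of_gt hy.1)).differentiableAt.differentiableWithinAt
        · intro y hy
          rw [interior_Icc] at hy
          rw [(aux_h_deriv (ne_of_gt hy.1)).deriv]
          have := aux_k_nonpos hy.1 hy.2.le
          linarith
      have := hanti (Set.mem_Icc.mpr ⟨hx, hx1⟩) (Set.mem_Icc.mpr ⟨zero_le_one, le_refl 1⟩) hx1
      rw [h1] at this; exact this
    · have hmono : MonotoneOn h (Set.Ici 1) := by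
        refine monotoneOn_of_deriv_nonneg (convex_Ici 1) hcont.continuousOn ?_ ?_
        · intro y hy
          rw [interior_Ici] at hy
          exact (aux_h_deriv (lt_trans one_pos hy).ne').differentiableAt.differentiableWithinAt
        · intro y hy
          rw [interior_Ici] at hy
          rw [(aux_h_deriv (lt_trans one_pos hy).ne').deriv]
          have := aux_k_nonneg hy.le
          linarith
      have := hmono (Set.mem_Ici.mpr le_rfl) (Set.mem_Ici.mpr hx1.le) hx1.le
      rw [h1] at this; exact this
  simp only [hh] at key
  linarith

private lemma phi_nonneg {x : ℝ} (hx : 0 ≤ x) : 0 ≤ x * Real.log x - x + 1 := by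
  rcases eq_or_lt_of_le hx with h | h
  · simp [← h]
  · have h1 := Real.one_sub_inv_le_log_of_pos h
    have h2 : x * (1 - x⁻¹) ≤ x * Real.log x := by
      exact mul_le_mul_of_nonneg_left h1 hx
    have h3 : x * (1 - x⁻¹) = x - 1 := by field_simp
    linarith

/-- If `P, Q` are probability measures on a measurable space `Ω` and `f : Ω → ℝ^m` is a
measurable function with `‖f ω‖₂ ≤ C` for all `ω`, then
`‖∫ f dP − ∫ f dQ‖₂ ≤ C · √(2 · KL(Q‖P))`. -/
theorem bias_le_sqrt_klDiv {Ω : Type*} [MeasurableSpace Ω] {m : ℕ}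
    (P Q : Measure Ω) [IsProbabilityMeasure P] [IsProbabilityMeasure Q]
    (f : Ω → EuclideanSpace ℝ (Fin m)) (hf : Measurable f)
    (C : ℝ) (hC : ∀ ω, ‖f ω‖ ≤ C) :
    (‖(∫ ω, f ω ∂P) - ∫ ω, f ω ∂Q‖₊ : ℝ≥0∞)
      ≤ ENNReal.ofReal C * (2 * klDivM Q P) ^ (2⁻¹ : ℝ) := by
  by_cases hCpos : 0 < C
  swap
  · have hf0 : f = fun _ => 0 := funext fun ω =>
      norm_le_zero_iff.mp ((hC ω).trans (not_lt.mp hCpos))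
    rw [hf0]
    simp
  by_cases hQP : Q ≪ P ∧ Integrable (llr Q P) Q
  swap
  · rw [klDivM, if_neg hQP]
    have h1 : ((2 : ℝ≥0∞) * ⊤) = ⊤ := by simp
    rw [h1, ENNReal.top_rpow_of_pos (by norm_num),
      ENNReal.mul_top ((ENNReal.ofReal_pos.mpr hCpos).ne')]
    exact le_top
  obtain ⟨hac, hint⟩ := hQP
  rw [klDivM, if_pos ⟨hac, hint⟩]
  have hC0 : 0 ≤ C := hCpos.le
  set g : Ω → ℝ := fun ω => (Q.rnDeriv P ω).toReal with hgdef
  have hg_meas : Measurable g := (Measure.measurable_rnDeriv Q P).ennreal_toReal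
  have hg_nonneg : ∀ ω, 0 ≤ g ω := fun ω => ENNReal.toReal_nonneg
  have hg_int : Integrable g P := Measure.integrable_toReal_rnDeriv
  have hg_int1 : ∫ ω, g ω ∂P = 1 := by
    simp only [hgdef]
    rw [Measure.integral_toReal_rnDeriv hac]
    simp
  set K := ∫ ω, llr Q P ω ∂Q with hKdef
  have hKg : ∫ ω, g ω * llr Q P ω ∂P = K := by
    rw [hKdef, ← integral_rnDeriv_smul hac (f := llr Q P)]
    simp only [hgdef, smul_eq_mul]
  have hgl_int : Integrable (fun ω => g ω * llr Q P ω) P := by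
    have := (integrable_rnDeriv_smul_iff hac (f := llr Q P)).mpr hint
    simpa [hgdef, smul_eq_mul] using this
  have hllr_eq : ∀ ω, llr Q P ω = Real.log (g ω) := fun ω => rfl
  have hgl_int' : Integrable (fun ω => g ω * Real.log (g ω)) P := by
    simpa [hllr_eq] using hgl_int
  have hφ_int : Integrable (fun ω => g ω * Real.log (g ω) - g ω + 1) P :=
    (hgl_int'.sub hg_int).add (integrable_const 1)
  have hsub_int : Integrable (fun ω => g ω * Real.log (g ω) - g ω) P := hgl_int'.sub hg_int
  have hφ_int_eq : ∫ ω, (g ω * Real.log (g ω) - g ω + 1) ∂P = K := by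
    rw [integral_add hsub_int (integrable_const 1),
      integral_sub hgl_int' hg_int, hg_int1, integral_const]
    have h2 : ∫ ω, g ω * Real.log (g ω) ∂P = K := by
      rw [← hKg]
      exact integral_congr_ae (Filter.Eventually.of_forall fun ω => rfl)
    rw [h2]
    simp
  have hφ_nonneg : ∀ ω, 0 ≤ g ω * Real.log (g ω) - g ω + 1 :=
    fun ω => phi_nonneg (hg_nonneg ω)
  set u : Ω → ℝ := fun ω => |g ω - 1| / Real.sqrt (g ω + 2) with hu
  set v : Ω → ℝ := fun ω => Real.sqrt (g ω + 2) with hv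
  have hgp2 : ∀ ω, (0:ℝ) < g ω + 2 := fun ω => by have := hg_nonneg ω; linarith
  have hu_nonneg : ∀ ω, 0 ≤ u ω := fun ω => by
    simp only [hu]; positivity
  have hv_nonneg : ∀ ω, 0 ≤ v ω := fun ω => Real.sqrt_nonneg _
  have hu_meas : Measurable u :=
    (hg_meas.sub measurable_const).abs.div (hg_meas.add measurable_const).sqrt
  have hv_meas : Measurable v := (hg_meas.add measurable_const).sqrt
  have hu_sq : ∀ ω, u ω ^ 2 = (g ω - 1) ^ 2 / (g ω + 2) := by
    intro ω
    simp only [hu]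
    rw [div_pow, sq_abs, Real.sq_sqrt (hgp2 ω).le]
  have hv_sq : ∀ ω, v ω ^ 2 = g ω + 2 := fun ω => Real.sq_sqrt (hgp2 ω).le
  have hu_sq_le : ∀ ω, u ω ^ 2 ≤ (2/3) * (g ω * Real.log (g ω) - g ω + 1) := by
    intro ω
    rw [hu_sq ω, div_le_iff₀ (hgp2 ω)]
    have := pointwise_pinsker (hg_nonneg ω)
    linarith
  have hu2_int : Integrable (fun ω => u ω ^ 2) P := by
    refine Integrable.mono (hφ_int.const_mul (2/3))
      ((hu_meas.pow_const 2).aestronglyMeasurable) ?_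
    refine Filter.Eventually.of_forall fun ω => ?_
    rw [Real.norm_eq_abs, Real.norm_eq_abs, abs_of_nonneg (sq_nonneg _),
      abs_of_nonneg (by have := hφ_nonneg ω; positivity)]
    exact hu_sq_le ω
  have hv2_int : Integrable (fun ω => v ω ^ 2) P :=
    (hg_int.add (integrable_const 2)).congr
      (Filter.Eventually.of_forall fun ω => (hv_sq ω).symm)
  have hu_mem : MemLp u (ENNReal.ofReal 2) P := by
    rw [show (ENNReal.ofReal 2) = 2 by norm_num]
    exact (memLp_two_iff_integrable_sq hu_meas.aestronglyMeasurable).mpr hu2_int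
  have hv_mem : MemLp v (ENNReal.ofReal 2) P := by
    rw [show (ENNReal.ofReal 2) = 2 by norm_num]
    exact (memLp_two_iff_integrable_sq hv_meas.aestronglyMeasurable).mpr hv2_int
  have hconj : Real.HolderConjugate 2 2 := Real.holderConjugate_iff.mpr ⟨one_lt_two, by norm_num⟩
  have hCS := integral_mul_le_Lp_mul_Lq_of_nonneg hconj
    (Filter.Eventually.of_forall hu_nonneg) (Filter.Eventually.of_forall hv_nonneg)
    hu_mem hv_mem
  rw [show (1/(2:ℝ)) = (2:ℝ)⁻¹ by norm_num] at hCS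
  simp only [Real.rpow_two] at hCS
  have huv : ∀ ω, u ω * v ω = |g ω - 1| := by
    intro ω
    simp only [hu, hv]
    rw [div_mul_cancel₀]
    exact (Real.sqrt_pos.mpr (hgp2 ω)).ne'
  have hInt_u2 : ∫ ω, u ω ^ 2 ∂P ≤ (2/3) * K := by
    calc ∫ ω, u ω ^ 2 ∂P ≤ ∫ ω, (2/3) * (g ω * Real.log (g ω) - g ω + 1) ∂P :=
          integral_mono hu2_int (hφ_int.const_mul (2/3)) (fun ω => hu_sq_le ω)
      _ = (2/3) * K := by rw [integral_const_mul, hφ_int_eq]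
  have hK0 : 0 ≤ K := by
    have h1 : 0 ≤ ∫ ω, u ω ^ 2 ∂P := integral_nonneg fun ω => sq_nonneg _
    linarith
  have hInt_v2 : ∫ ω, v ω ^ 2 ∂P = 3 := by
    rw [integral_congr_ae (Filter.Eventually.of_forall fun ω => hv_sq ω),
      integral_add hg_int (integrable_const 2), hg_int1, integral_const]
    simp
    norm_num
  have hrp : ∀ a : ℝ, a ^ ((2:ℝ)⁻¹) = Real.sqrt a := fun a => by
    rw [Real.sqrt_eq_rpow, one_div]
  have hpinsker : ∫ ω, |g ω - 1| ∂P ≤ Real.sqrt (2 * K) := by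
    have e1 : ∫ ω, |g ω - 1| ∂P = ∫ ω, u ω * v ω ∂P :=
      (integral_congr_ae (Filter.Eventually.of_forall fun ω => huv ω)).symm
    rw [e1]
    calc ∫ ω, u ω * v ω ∂P
        ≤ (∫ ω, u ω ^ 2 ∂P) ^ ((2:ℝ)⁻¹) * (∫ ω, v ω ^ 2 ∂P) ^ ((2:ℝ)⁻¹) := hCS
      _ ≤ ((2/3) * K) ^ ((2:ℝ)⁻¹) * (3:ℝ) ^ ((2:ℝ)⁻¹) := by
          rw [hInt_v2]
          exact mul_le_mul_of_nonneg_right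
            (Real.rpow_le_rpow (integral_nonneg fun ω => sq_nonneg _) hInt_u2 (by norm_num))
            (Real.rpow_nonneg (by norm_num) _)
      _ = Real.sqrt (2 * K) := by
          rw [hrp, hrp, ← Real.sqrt_mul (mul_nonneg (by norm_num) hK0)]
          congr 1
          ring
  have hf_intP : Integrable f P :=
    (integrable_const C).mono' hf.aestronglyMeasurable (Filter.Eventually.of_forall hC)
  have hf_intQ : Integrable f Q :=
    (integrable_const C).mono' hf.aestronglyMeasurable (Filter.Eventually.of_forall hC)
  have hgf_int : Integrable (fun ω => g ω • f ω) P := by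
    have := (integrable_rnDeriv_smul_iff hac (f := f)).mpr hf_intQ
    simpa [hgdef] using this
  have hQeq : ∫ ω, f ω ∂Q = ∫ ω, g ω • f ω ∂P := by
    rw [← integral_rnDeriv_smul hac (f := f)]
  have hdiff : (∫ ω, f ω ∂P) - ∫ ω, f ω ∂Q = ∫ ω, (1 - g ω) • f ω ∂P := by
    rw [hQeq, ← integral_sub hf_intP hgf_int]
    congr 1
    funext ω
    rw [sub_smul, one_smul]
  have hnorm : ‖(∫ ω, f ω ∂P) - ∫ ω, f ω ∂Q‖ ≤ C * ∫ ω, |g ω - 1| ∂P := by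
    rw [hdiff]
    calc ‖∫ ω, (1 - g ω) • f ω ∂P‖ ≤ ∫ ω, ‖(1 - g ω) • f ω‖ ∂P :=
          norm_integral_le_integral_norm _
      _ ≤ ∫ ω, C * |g ω - 1| ∂P := by
          refine integral_mono_of_nonneg (Filter.Eventually.of_forall fun ω => norm_nonneg _)
            (((hg_int.sub (integrable_const 1)).abs.const_mul C))
            (Filter.Eventually.of_forall fun ω => ?_)
          show ‖(1 - g ω) • f ω‖ ≤ C * |g ω - 1|
          rw [norm_smul, Real.norm_eq_abs, abs_sub_comm, mul_comm C]
          exact mul_le_mul_of_nonneg_left (hC ω) (abs_nonneg _)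
      _ = C * ∫ ω, |g ω - 1| ∂P := integral_const_mul C _
  have hreal : ‖(∫ ω, f ω ∂P) - ∫ ω, f ω ∂Q‖ ≤ C * Real.sqrt (2 * K) :=
    hnorm.trans (mul_le_mul_of_nonneg_left hpinsker hC0)
  calc (‖(∫ ω, f ω ∂P) - ∫ ω, f ω ∂Q‖₊ : ℝ≥0∞)
      = ENNReal.ofReal ‖(∫ ω, f ω ∂P) - ∫ ω, f ω ∂Q‖ := (ofReal_norm _).symm
    _ ≤ ENNReal.ofReal (C * Real.sqrt (2 * K)) := ENNReal.ofReal_le_ofReal hreal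
    _ = ENNReal.ofReal C * ENNReal.ofReal (Real.sqrt (2 * K)) := ENNReal.ofReal_mul hC0
    _ = ENNReal.ofReal C * (2 * ENNReal.ofReal K) ^ (2⁻¹ : ℝ) := by
        congr 1
        rw [← hrp,
          ← ENNReal.ofReal_rpow_of_nonneg (mul_nonneg (by norm_num) hK0) (by norm_num : (0:ℝ) ≤ 2⁻¹),
          ENNReal.ofReal_mul (by norm_num : (0:ℝ) ≤ 2)]
        norm_num
end

section
/- Let H be a measure space with a σ-finite measure dh, and let p̃: ℝ^d × H → (0,∞) be measurable with Z(v) := ∫ p̃(v,h) dh ∈ (0,∞) for each v; suppose that for each h the map v ↦ p̃(v,h) is differentiable, that ∇_v Z(v) = ∫ ∇_v p̃(v,h) dh (differentiation under the integral sign is valid), and that ‖∇_v log p̃(v,h)‖₂ ≤ A for all v and h. Let p(h|v) := p̃(v,h)/Z(v) be the posterior density and let q(·|v) be any probability density on H. Then the bias of the variational score estimate satisfies ‖E_{q(h|v)}[∇_v log p̃(v,h)] − ∇_v log Z(v)‖₂ ≤ A · √(2 · KL(q(·|v)‖p(·|v))); i.e., it is bounded by the square root of the KL divergence between the variational posterior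 and the true posterior up to a constant. -/
open MeasureTheory
open scoped ENNReal Classical

/-- The Kullback–Leibler divergence `KL(q‖p) = ∫ q log(q/p) dμ` between two densities w.r.t.
the measure `μ`, with value `+∞` when the integral diverges. -/
noncomputable def klDivD {H : Type*} [MeasurableSpace H] (μ : Measure H) (q p : H → ℝ) :
    ℝ≥0∞ :=
  if Integrable (fun h => q h * Real.log (q h / p h)) μ
  then ENNReal.ofReal (∫ h, q h * Real.log (q h / p h) ∂μ) else ⊤

section Aux
open Real Filter


/-- derivative helper: G x = (x+1) log x - 2(x-1) -/
lemma hasDerivAt_G {x : ℝ} (hx : 0 < x) :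
    HasDerivAt (fun y => (y + 1) * Real.log y - 2 * (y - 1))
      (Real.log x + (x + 1) * x⁻¹ - 2) x := by
  have h1 : HasDerivAt (fun y : ℝ => (y + 1) * Real.log y)
      (1 * Real.log x + (x + 1) * x⁻¹) x :=
    ((hasDerivAt_id x).add_const 1).mul (Real.hasDerivAt_log hx.ne')
  have h2 : HasDerivAt (fun y : ℝ => 2 * (y - 1)) 2 x := by
    simpa using ((hasDerivAt_id x).sub_const 1).const_mul 2
  have h3 := h1.sub h2
  simp only [one_mul] at h3
  exact h3

lemma G_deriv_nonneg {x : ℝ} (hx : 0 < x) : 0 ≤ Real.log x + (x + 1) * x⁻¹ - 2 := by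
  have h := Real.log_le_sub_one_of_pos (inv_pos.2 hx)
  rw [Real.log_inv] at h
  have hx' : x ≠ 0 := hx.ne'
  have : 1 - x⁻¹ ≤ Real.log x := by linarith
  have h2 : (x + 1) * x⁻¹ = 1 + x⁻¹ := by field_simp
  rw [h2]; linarith

lemma G_nonpos {x : ℝ} (hx : 0 < x) (hx1 : x ≤ 1) :
    (x + 1) * Real.log x - 2 * (x - 1) ≤ 0 := by
  have hmono : MonotoneOn (fun y => (y + 1) * Real.log y - 2 * (y - 1)) (Set.Ioi (0:ℝ)) := by
    refine monotoneOn_of_deriv_nonneg (convex_Ioi 0) ?_ ?_ ?_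
    · intro y hy
      exact ((hasDerivAt_G (Set.mem_Ioi.mp hy)).continuousAt).continuousWithinAt
    · intro y hy
      rw [interior_Ioi] at hy
      exact (hasDerivAt_G (Set.mem_Ioi.mp hy)).differentiableAt.differentiableWithinAt
    · intro y hy
      rw [interior_Ioi] at hy
      rw [(hasDerivAt_G (Set.mem_Ioi.mp hy)).deriv]
      exact G_deriv_nonneg (Set.mem_Ioi.mp hy)
  have := hmono (Set.mem_Ioi.mpr hx) (Set.mem_Ioi.mpr one_pos) hx1
  simpa using this

lemma G_nonneg {x : ℝ} (hx1 : 1 ≤ x) :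
    0 ≤ (x + 1) * Real.log x - 2 * (x - 1) := by
  have hmono : MonotoneOn (fun y => (y + 1) * Real.log y - 2 * (y - 1)) (Set.Ioi (0:ℝ)) := by
    refine monotoneOn_of_deriv_nonneg (convex_Ioi 0) ?_ ?_ ?_
    · intro y hy
      exact ((hasDerivAt_G (Set.mem_Ioi.mp hy)).continuousAt).continuousWithinAt
    · intro y hy
      rw [interior_Ioi] at hy
      exact (hasDerivAt_G (Set.mem_Ioi.mp hy)).differentiableAt.differentiableWithinAt
    · intro y hy
      rw [interior_Ioi] at hy
      rw [(hasDerivAt_G (Set.mem_Ioi.mp hy)).deriv]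
      exact G_deriv_nonneg (Set.mem_Ioi.mp hy)
  have := hmono (Set.mem_Ioi.mpr one_pos) (Set.mem_Ioi.mpr (lt_of_lt_of_le one_pos hx1)) hx1
  simpa using this

lemma hasDerivAt_F {x : ℝ} (hx : 0 < x) :
    HasDerivAt (fun y => (2*y+4) * (y * Real.log y - y + 1) - 3*(y-1)^2)
      (4 * ((x + 1) * Real.log x - 2 * (x - 1))) x := by
  have hlog : HasDerivAt (fun y : ℝ => y * Real.log y) (Real.log x + 1) x := by
    have := (hasDerivAt_id x).mul (Real.hasDerivAt_log hx.ne')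
    have hx' : x ≠ 0 := hx.ne'
    refine this.congr_deriv ?_
    simp [hx']
  have h1 : HasDerivAt (fun y : ℝ => y * Real.log y - y + 1) (Real.log x + 1 - 1) x :=
    (hlog.sub (hasDerivAt_id x)).add_const 1
  have h2 : HasDerivAt (fun y : ℝ => 2*y+4) 2 x := by
    simpa using ((hasDerivAt_id x).const_mul 2).add_const 4
  have h3 := h2.mul h1
  have h4 : HasDerivAt (fun y : ℝ => 3*(y-1)^2) (3*(2*(x-1))) x := by
    have := (((hasDerivAt_id x).sub_const 1).pow 2).const_mul 3
    simpa [mul_comm] using this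
  have h5 := h3.sub h4
  refine h5.congr_deriv ?_
  ring

lemma F_continuousOn : Continuous (fun y : ℝ => (2*y+4) * (y * Real.log y - y + 1) - 3*(y-1)^2) := by
  have := Real.continuous_mul_log
  fun_prop

lemma key_ineq {x : ℝ} (hx : 0 ≤ x) :
    3 * (x - 1)^2 ≤ (2*x+4) * (x * Real.log x - x + 1) := by
  set F := fun y : ℝ => (2*y+4) * (y * Real.log y - y + 1) - 3*(y-1)^2 with hF
  have hF1 : F 1 = 0 := by simp [hF]
  suffices h : 0 ≤ F x by simp only [hF] at h; linarith
  rcases le_or_gt x 1 with hx1 | hx1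
  · -- antitone on [0,1]
    have hanti : AntitoneOn F (Set.Icc (0:ℝ) 1) := by
      refine antitoneOn_of_deriv_nonpos (convex_Icc 0 1) F_continuousOn.continuousOn ?_ ?_
      · intro y hy
        rw [interior_Icc] at hy
        exact (hasDerivAt_F hy.1).differentiableAt.differentiableWithinAt
      · intro y hy
        rw [interior_Icc] at hy
        rw [(hasDerivAt_F hy.1).deriv]
        have := G_nonpos hy.1 hy.2.le
        linarith
    have := hanti (Set.mem_Icc.mpr ⟨hx, hx1⟩) (Set.mem_Icc.mpr ⟨zero_le_one, le_refl 1⟩) hx1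
    rw [hF1] at this; exact this
  · -- monotone on [1,∞)
    have hmono : MonotoneOn F (Set.Ici (1:ℝ)) := by
      refine monotoneOn_of_deriv_nonneg (convex_Ici 1) F_continuousOn.continuousOn ?_ ?_
      · intro y hy
        rw [interior_Ici] at hy
        exact (hasDerivAt_F (lt_trans one_pos hy)).differentiableAt.differentiableWithinAt
      · intro y hy
        rw [interior_Ici] at hy
        rw [(hasDerivAt_F (lt_trans one_pos hy)).deriv]
        have := G_nonneg (le_of_lt hy)
        linarith
    have := hmono (Set.mem_Ici.mpr (le_refl 1)) (Set.mem_Ici.mpr hx1.le) hx1.le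
    rw [hF1] at this; exact this


lemma cs_pointwise {p q : ℝ} (hp : 0 < p) (hq : 0 ≤ q) :
    3*(q-p)^2/(2*q+4*p) ≤ q * Real.log (q/p) - q + p := by
  have hx : 0 ≤ q/p := div_nonneg hq hp.le
  have hk := key_ineq hx
  have hD : 0 < 2*q+4*p := by linarith
  rw [div_le_iff₀ hD]
  have hqe : q = p * (q/p) := by field_simp
  set x := q/p with hxdef
  rw [hqe]
  have h2 := mul_le_mul_of_nonneg_left hk (sq_nonneg p)
  nlinarith [h2]

lemma psi_nonneg {p q : ℝ} (hp : 0 < p) (hq : 0 ≤ q) :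
    0 ≤ q * Real.log (q/p) - q + p :=
  le_trans (div_nonneg (by positivity) (by linarith)) (cs_pointwise hp hq)

lemma pinsker {H : Type*} [MeasurableSpace H] (μ : Measure H) (Q P : H → ℝ)
    (hQm : Measurable Q) (hPm : Measurable P)
    (hQ0 : ∀ h, 0 ≤ Q h) (hP0 : ∀ h, 0 < P h)
    (hQi : Integrable Q μ) (hPi : Integrable P μ)
    (hQ1 : ∫ h, Q h ∂μ = 1) (hP1 : ∫ h, P h ∂μ = 1)
    (hKi : Integrable (fun h => Q h * Real.log (Q h / P h)) μ) :
    0 ≤ ∫ h, Q h * Real.log (Q h / P h) ∂μ ∧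
    ∫ h, |Q h - P h| ∂μ ≤ Real.sqrt (2 * ∫ h, Q h * Real.log (Q h / P h) ∂μ) := by
  set K := ∫ h, Q h * Real.log (Q h / P h) ∂μ with hKdef
  set φ := fun h => Q h * Real.log (Q h / P h) - Q h + P h with hφdef
  have hφi : Integrable φ μ := (hKi.sub hQi).add hPi
  have hsub : Integrable (fun h => Q h * Real.log (Q h / P h) - Q h) μ := hKi.sub hQi
  have hφint : ∫ h, φ h ∂μ = K := by
    simp only [hφdef]
    rw [integral_add hsub hPi, integral_sub hKi hQi, hQ1, hP1]
    ring
  have hφ0 : ∀ h, 0 ≤ φ h := fun h => psi_nonneg (hP0 h) (hQ0 h)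
  have hK0 : 0 ≤ K := hφint ▸ integral_nonneg hφ0
  refine ⟨hK0, ?_⟩
  set f := fun h => Real.sqrt (3*(Q h - P h)^2 / (2*Q h + 4*P h)) with hfdef
  set g := fun h => Real.sqrt ((2*Q h + 4*P h)/3) with hgdef
  have hD : ∀ h, 0 < 2*Q h + 4*P h := fun h => by
    have := hQ0 h; have := hP0 h; linarith
  have hfm : Measurable f :=
    (((hQm.sub hPm).pow_const 2).const_mul 3 |>.div ((hQm.const_mul 2).add (hPm.const_mul 4))).sqrt
  have hgm : Measurable g :=
    (((hQm.const_mul 2).add (hPm.const_mul 4)).div_const 3).sqrt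
  have hf0 : ∀ h, 0 ≤ f h := fun h => Real.sqrt_nonneg _
  have hg0 : ∀ h, 0 ≤ g h := fun h => Real.sqrt_nonneg _
  have hfsq : ∀ h, f h ^ 2 = 3*(Q h - P h)^2 / (2*Q h + 4*P h) := fun h =>
    Real.sq_sqrt (div_nonneg (by positivity) (hD h).le)
  have hgsq : ∀ h, g h ^ 2 = (2*Q h + 4*P h)/3 := fun h =>
    Real.sq_sqrt (div_nonneg (hD h).le (by norm_num))
  have hcs : ∀ h, f h ^ 2 ≤ φ h := fun h => by
    rw [hfsq h]; exact cs_pointwise (hP0 h) (hQ0 h)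
  have hf2i : Integrable (fun h => f h ^ 2) μ := by
    refine Integrable.mono' hφi ((hfm.pow_const 2).aestronglyMeasurable) ?_
    filter_upwards with h
    rw [Real.norm_of_nonneg (by positivity)]
    exact hcs h
  have hg2i : Integrable (fun h => g h ^ 2) μ := by
    have : Integrable (fun h => (2*Q h + 4*P h)/3) μ :=
      (((hQi.const_mul 2).add (hPi.const_mul 4)).div_const 3)
    refine this.congr ?_
    filter_upwards with h
    rw [hgsq h]
  have hfL2 : MemLp f (ENNReal.ofReal 2) μ := by
    have h2 : ENNReal.ofReal (2:ℝ) = 2 := by norm_num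
    rw [h2]
    exact (memLp_two_iff_integrable_sq hfm.aestronglyMeasurable).mpr hf2i
  have hgL2 : MemLp g (ENNReal.ofReal 2) μ := by
    have h2 : ENNReal.ofReal (2:ℝ) = 2 := by norm_num
    rw [h2]
    exact (memLp_two_iff_integrable_sq hgm.aestronglyMeasurable).mpr hg2i
  have hpq : (2:ℝ).HolderConjugate 2 := ⟨by norm_num, by norm_num, by norm_num⟩
  have hholder := integral_mul_le_Lp_mul_Lq_of_nonneg hpq
    (Filter.Eventually.of_forall hf0) (Filter.Eventually.of_forall hg0) hfL2 hgL2
  -- ∫ f*g = ∫ |Q - P|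
  have hfg : ∀ h, f h * g h = |Q h - P h| := fun h => by
    rw [hfdef, hgdef]
    rw [← Real.sqrt_mul (div_nonneg (by positivity) (hD h).le)]
    have : 3*(Q h - P h)^2 / (2*Q h + 4*P h) * ((2*Q h + 4*P h)/3) = (Q h - P h)^2 := by
      field_simp
      have hne : Q h * 2 + P h * 4 ≠ 0 := by have := hD h; intro e; linarith
      rw [mul_div_assoc, div_self hne, mul_one]
    rw [this, Real.sqrt_sq_eq_abs]
  have hI1 : ∫ h, |Q h - P h| ∂μ = ∫ h, f h * g h ∂μ := by
    refine integral_congr_ae ?_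
    filter_upwards with h
    rw [hfg h]
  -- bound the two factors
  have hf2b : ∫ h, f h ^ (2:ℝ) ∂μ ≤ K := by
    have : ∫ h, f h ^ (2:ℝ) ∂μ = ∫ h, f h ^ 2 ∂μ := by
      refine integral_congr_ae (Filter.Eventually.of_forall fun h => ?_)
      show f h ^ (2:ℝ) = f h ^ (2:ℕ)
      rw [show ((2:ℝ) = ((2:ℕ):ℝ)) by norm_num, Real.rpow_natCast]
    rw [this, ← hφint]
    exact integral_mono hf2i hφi hcs
  have hg2b : ∫ h, g h ^ (2:ℝ) ∂μ = 2 := by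
    have e1 : ∫ h, g h ^ (2:ℝ) ∂μ = ∫ h, (2*Q h + 4*P h)/3 ∂μ := by
      refine integral_congr_ae (Filter.Eventually.of_forall fun h => ?_)
      show g h ^ (2:ℝ) = (2*Q h + 4*P h)/3
      rw [show ((2:ℝ) = ((2:ℕ):ℝ)) by norm_num, Real.rpow_natCast, hgsq h]
      norm_num
    rw [e1, integral_div, integral_add (hQi.const_mul 2) (hPi.const_mul 4),
      integral_const_mul, integral_const_mul, hQ1, hP1]
    norm_num
  have hf2c : (0:ℝ) ≤ ∫ h, f h ^ (2:ℝ) ∂μ := by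
    refine integral_nonneg fun h => ?_
    exact Real.rpow_nonneg (hf0 h) 2
  calc ∫ h, |Q h - P h| ∂μ = ∫ h, f h * g h ∂μ := hI1
    _ ≤ (∫ h, f h ^ (2:ℝ) ∂μ) ^ (1/(2:ℝ)) * (∫ h, g h ^ (2:ℝ) ∂μ) ^ (1/(2:ℝ)) := hholder
    _ ≤ K ^ (1/(2:ℝ)) * 2 ^ (1/(2:ℝ)) := by
        rw [hg2b]
        exact mul_le_mul_of_nonneg_right (Real.rpow_le_rpow hf2c hf2b (by norm_num))
          (Real.rpow_nonneg (by norm_num) _)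
    _ = Real.sqrt (2 * K) := by
        rw [← Real.sqrt_eq_rpow, ← Real.sqrt_eq_rpow, ← Real.sqrt_mul hK0, mul_comm]


lemma grad_log_comp {F : Type*} [NormedAddCommGroup F] [InnerProductSpace ℝ F]
    [CompleteSpace F] (f : F → ℝ) (x : F)
    (hf : DifferentiableAt ℝ f x) (hx : f x ≠ 0) :
    gradient (fun y => Real.log (f y)) x = (f x)⁻¹ • gradient f x := by
  have h2 := (Real.hasDerivAt_log hx).comp_hasFDerivAt x hf.hasFDerivAt
  have h3 : gradient (fun y => Real.log (f y)) x
      = (InnerProductSpace.toDual ℝ F).symm ((f x)⁻¹ • fderiv ℝ f x) := by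
    have := h2.hasGradientAt.gradient
    rw [show (fun y => Real.log (f y)) = Real.log ∘ f from rfl]
    simpa using this
  rw [h3, gradient]
  simp [map_smulₛₗ]

lemma measurable_gradient_param {d : ℕ} {H : Type*} [MeasurableSpace H]
    (f : EuclideanSpace ℝ (Fin d) → H → ℝ) (hmeas : ∀ v, Measurable (f v))
    (hdiff : ∀ h, Differentiable ℝ (fun v => f v h)) (v : EuclideanSpace ℝ (Fin d)) :
    Measurable (fun h => gradient (fun w => f w h) v) := by
  -- coordinates of the gradient are directional derivatives
  have hcoord : ∀ h i, (gradient (fun w => f w h) v) i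
      = fderiv ℝ (fun w => f w h) v (EuclideanSpace.single i 1) := by
    intro h i
    have h1 : fderiv ℝ (fun w => f w h) v (EuclideanSpace.single i 1)
        = @inner ℝ _ _ (gradient (fun w => f w h) v) (EuclideanSpace.single i 1) := by
      rw [gradient, ← InnerProductSpace.toDual_apply_apply,
        (InnerProductSpace.toDual ℝ _).apply_symm_apply]
    rw [h1, EuclideanSpace.inner_single_right]
    simp
  -- each directional derivative is measurable as a pointwise limit
  have hdir : ∀ i : Fin d, Measurable
      (fun h => fderiv ℝ (fun w => f w h) v (EuclideanSpace.single i 1)) := by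
    intro i
    have hc : Tendsto (fun n : ℕ => ‖(n:ℝ)‖) atTop atTop :=
      tendsto_atTop_mono (fun n => le_abs_self _) tendsto_natCast_atTop_atTop
    refine measurable_of_tendsto_metrizable
      (f := fun n h => (n:ℝ) • (f (v + ((n:ℝ))⁻¹ • EuclideanSpace.single i 1) h - f v h)) ?_ ?_
    · intro n
      exact (((hmeas _).sub (hmeas v)).const_smul ((n:ℝ)))
    · rw [tendsto_pi_nhds]
      intro h
      exact ((hdiff h).differentiableAt.hasFDerivAt).lim (EuclideanSpace.single i 1) hc
  -- assemble
  have : (fun h => gradient (fun w => f w h) v)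
      = fun h => (MeasurableEquiv.toLp 2 (Fin d → ℝ))
          (fun i => fderiv ℝ (fun w => f w h) v (EuclideanSpace.single i 1)) := by
    funext h
    apply (MeasurableEquiv.toLp 2 (Fin d → ℝ)).symm.injective
    funext i
    exact hcoord h i
  rw [this]
  exact (MeasurableEquiv.toLp 2 (Fin d → ℝ)).measurable.comp
    (measurable_pi_lambda _ hdir)


end Aux

/-- **Bias of VaES, KL version.** If `p̃(v,h) > 0` with `Z(v) = ∫ p̃(v,h) dh ∈ (0,∞)`,
differentiation under the integral sign is valid for `Z`, and
`‖∇_v log p̃(v,h)‖₂ ≤ A` for all `v, h`, then for any variational posterior density `q(·|v)`,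
`‖E_{q(h|v)}[∇_v log p̃(v,h)] − ∇_v log Z(v)‖₂ ≤ A · √(2 · KL(q(·|v) ‖ p(·|v)))`,
where `p(h|v) = p̃(v,h)/Z(v)` is the true posterior. -/
theorem vaes_bias_le_sqrt_kl {d : ℕ} {H : Type*} [MeasurableSpace H]
    (μ : Measure H) [SigmaFinite μ]
    (ptilde : EuclideanSpace ℝ (Fin d) → H → ℝ)
    (hmeas : ∀ v, Measurable (ptilde v))
    (hpos : ∀ v h, 0 < ptilde v h)
    (hint : ∀ v, Integrable (ptilde v) μ)
    (hZpos : ∀ v, 0 < ∫ h, ptilde v h ∂μ)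
    (hdiff : ∀ h, Differentiable ℝ (fun v => ptilde v h))
    (hZdiff : Differentiable ℝ (fun v => ∫ h, ptilde v h ∂μ))
    (hswap : ∀ v, gradient (fun w => ∫ h, ptilde w h ∂μ) v
      = ∫ h, gradient (fun w => ptilde w h) v ∂μ)
    (A : ℝ) (hA : ∀ v h, ‖gradient (fun w => Real.log (ptilde w h)) v‖ ≤ A)
    (q : EuclideanSpace ℝ (Fin d) → H → ℝ)
    (hqmeas : ∀ v, Measurable (q v)) (hqnn : ∀ v h, 0 ≤ q v h)
    (hqnorm : ∀ v, ∫ h, q v h ∂μ = 1)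
    (hqint : ∀ v, Integrable
      (fun h => q v h • gradient (fun w => Real.log (ptilde w h)) v) μ)
    (v : EuclideanSpace ℝ (Fin d)) :
    (‖(∫ h, q v h • gradient (fun w => Real.log (ptilde w h)) v ∂μ)
        - gradient (fun w => Real.log (∫ h, ptilde w h ∂μ)) v‖₊ : ℝ≥0∞)
      ≤ ENNReal.ofReal A *
        (2 * klDivD μ (q v) (fun h => ptilde v h / ∫ h', ptilde v h' ∂μ)) ^ (2⁻¹ : ℝ) := by
  classical
  set Z : ℝ := ∫ h, ptilde v h ∂μ with hZdef
  have hZ : 0 < Z := hZpos v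
  set s : H → EuclideanSpace ℝ (Fin d) :=
    fun h => gradient (fun w => Real.log (ptilde w h)) v with hsdef
  set g : H → EuclideanSpace ℝ (Fin d) :=
    fun h => gradient (fun w => ptilde w h) v with hgdef
  set P : H → ℝ := fun h => ptilde v h / Z with hPdef
  set Q : H → ℝ := q v with hQdef
  -- basic facts
  have hsg : ∀ h, s h = (ptilde v h)⁻¹ • g h := fun h =>
    grad_log_comp (fun w => ptilde w h) v ((hdiff h).differentiableAt) (hpos v h).ne'
  have hgs : ∀ h, g h = ptilde v h • s h := fun h => by
    rw [hsg h, smul_smul, mul_inv_cancel₀ (hpos v h).ne', one_smul]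
  -- measurability
  have hgm : Measurable g := measurable_gradient_param ptilde hmeas hdiff v
  have hsm : Measurable s := by
    have : s = fun h => (ptilde v h)⁻¹ • g h := funext hsg
    rw [this]
    exact ((hmeas v).inv).smul hgm
  have hPm : Measurable P := (hmeas v).div_const Z
  have hQm : Measurable Q := hqmeas v
  -- nonemptiness and A ≥ 0
  have hne : Nonempty H := by
    rcases isEmpty_or_nonempty H with hE | hN
    · exfalso
      have := hqnorm v
      rw [integral_of_isEmpty] at this
      exact one_ne_zero this.symm
    · exact hN
  obtain ⟨h₀⟩ := hne
  have hA0 : 0 ≤ A := le_trans (norm_nonneg _) (hA v h₀)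
  -- integrabilities
  have hQi : Integrable Q μ := by
    by_contra hn
    have := hqnorm v
    rw [integral_undef hn] at this
    exact one_ne_zero this.symm
  have hPi : Integrable P μ := (hint v).div_const Z
  have hP1 : ∫ h, P h ∂μ = 1 := by
    simp only [hPdef]
    rw [integral_div, ← hZdef, div_self hZ.ne']
  have hQ1 : ∫ h, Q h ∂μ = 1 := hqnorm v
  have hPs : Integrable (fun h => P h • s h) μ := by
    refine Integrable.mono' ((hPi.const_mul A)) ((hPm.smul hsm).aestronglyMeasurable) ?_
    filter_upwards with h
    rw [norm_smul]
    have hP0 : 0 ≤ P h := div_nonneg (hpos v h).le hZ.le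
    rw [Real.norm_of_nonneg hP0]
    calc P h * ‖s h‖ ≤ P h * A := mul_le_mul_of_nonneg_left (hA v h) hP0
      _ = A * P h := mul_comm _ _
  -- the gradient of log Z is the posterior expectation of s
  have hgradZ : gradient (fun w => Real.log (∫ h, ptilde w h ∂μ)) v
      = ∫ h, P h • s h ∂μ := by
    have e1 : gradient (fun w => Real.log (∫ h, ptilde w h ∂μ)) v
        = Z⁻¹ • gradient (fun w => ∫ h, ptilde w h ∂μ) v :=
      grad_log_comp (fun w => ∫ h, ptilde w h ∂μ) v hZdiff.differentiableAt hZ.ne'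
    rw [e1, hswap v, ← integral_smul]
    refine integral_congr_ae (Filter.Eventually.of_forall fun h => ?_)
    show Z⁻¹ • g h = P h • s h
    rw [hgs h, smul_smul, hPdef]
    simp [div_eq_inv_mul]
  -- rewrite the difference
  have hsub2 : Integrable (fun h => (Q h - P h) • s h) μ := by
    refine ((hqint v).sub hPs).congr (Filter.Eventually.of_forall fun h => ?_)
    simp only [Pi.sub_apply]
    rw [sub_smul]
  have hdiff_eq : (∫ h, q v h • gradient (fun w => Real.log (ptilde w h)) v ∂μ)
        - gradient (fun w => Real.log (∫ h, ptilde w h ∂μ)) v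
      = ∫ h, (Q h - P h) • s h ∂μ := by
    rw [hgradZ, ← integral_sub (hqint v) hPs]
    refine integral_congr_ae (Filter.Eventually.of_forall fun h => ?_)
    simp only [Pi.sub_apply]
    rw [sub_smul]
  -- norm bound
  have habs_i : Integrable (fun h => |Q h - P h|) μ := (hQi.sub hPi).abs
  have hnorm_bound : ‖∫ h, (Q h - P h) • s h ∂μ‖ ≤ A * ∫ h, |Q h - P h| ∂μ := by
    calc ‖∫ h, (Q h - P h) • s h ∂μ‖ ≤ ∫ h, ‖(Q h - P h) • s h‖ ∂μ :=
          norm_integral_le_integral_norm _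
      _ ≤ ∫ h, |Q h - P h| * A ∂μ := by
          refine integral_mono hsub2.norm (habs_i.mul_const A) fun h => ?_
          rw [norm_smul, Real.norm_eq_abs]
          exact mul_le_mul_of_nonneg_left (hA v h) (abs_nonneg _)
      _ = A * ∫ h, |Q h - P h| ∂μ := by rw [integral_mul_const, mul_comm]
  rw [hdiff_eq]
  by_cases hKi : Integrable (fun h => Q h * Real.log (Q h / P h)) μ
  · -- finite KL case: apply Pinsker
    obtain ⟨hK0, hPk⟩ := pinsker μ Q P hQm hPm (fun h => hqnn v h)
      (fun h => div_pos (hpos v h) hZ) hQi hPi hQ1 hP1 hKi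
    set K : ℝ := ∫ h, Q h * Real.log (Q h / P h) ∂μ with hKdef
    have hkl : klDivD μ (q v) (fun h => ptilde v h / ∫ h', ptilde v h' ∂μ)
        = ENNReal.ofReal K := by
      unfold klDivD
      rw [if_pos (show Integrable
        (fun h => q v h * Real.log (q v h / (ptilde v h / ∫ h', ptilde v h' ∂μ))) μ from hKi)]
    rw [hkl]
    have e2 : (2 : ℝ≥0∞) * ENNReal.ofReal K = ENNReal.ofReal (2 * K) := by
      rw [ENNReal.ofReal_mul (by norm_num : (0:ℝ) ≤ 2)]
      norm_num
    rw [e2, ENNReal.ofReal_rpow_of_nonneg (by linarith : (0:ℝ) ≤ 2 * K)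
      (by norm_num : (0:ℝ) ≤ 2⁻¹), ← ENNReal.ofReal_mul hA0, ← enorm_eq_nnnorm, ← ofReal_norm]
    refine ENNReal.ofReal_le_ofReal ?_
    calc ‖∫ h, (Q h - P h) • s h ∂μ‖ ≤ A * ∫ h, |Q h - P h| ∂μ := hnorm_bound
      _ ≤ A * Real.sqrt (2 * K) := mul_le_mul_of_nonneg_left hPk hA0
      _ = A * (2 * K) ^ (2⁻¹ : ℝ) := by
          rw [Real.sqrt_eq_rpow]
          norm_num
  · -- infinite KL case
    have hkl : klDivD μ (q v) (fun h => ptilde v h / ∫ h', ptilde v h' ∂μ) = ⊤ := by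
      rw [klDivD, if_neg]
      exact hKi
    rw [hkl]
    rcases hA0.lt_or_eq with hApos | hAzero
    · have : (2 : ℝ≥0∞) * ⊤ = ⊤ := by simp
      rw [this, ENNReal.top_rpow_of_pos (by norm_num), ENNReal.mul_top
        (by simpa [ENNReal.ofReal_eq_zero] using hApos.not_ge)]
      exact le_top
    · -- A = 0 forces s ≡ 0
      have hs0 : ∀ h, s h = 0 := fun h =>
        norm_le_zero_iff.mp (le_trans (hA v h) hAzero.ge)
      have : ∫ h, (Q h - P h) • s h ∂μ = 0 := by
        refine integral_eq_zero_of_ae (Filter.Eventually.of_forall fun h => ?_)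
        simp [hs0 h]
      rw [this]
      simp
end

section
/- Let p̃: ℝ^d × ℝⁿ → (0,∞) be such that for each v, h ↦ p̃(v,h) is a continuously differentiable function with Z(v) := ∫ p̃(v,h) dh ∈ (0,∞), and let p(h|v) := p̃(v,h)/Z(v) be the posterior density. Let q be a continuously differentiable strictly positive probability density on ℝⁿ. Suppose for each i ∈ {1,…,d} there is a continuously differentiable g_i: ℝⁿ → ℝⁿ solving the Stein equation (S_{p(·|v)} g_i)(h) = ∂_{v_i} log p̃(v,h) − E_{p(h|v)}[∂_{v_i} log p̃(v,h)] for all h, with q(h)·g_i(h) → 0 as ‖h‖ → ∞, ∇·(q g_i) Lebesgue-integrable, and κ := √(Σ_{i=1}^d ∫ q‖g_i‖₂²) < ∞. Then ‖E_{q(h)}[∇_v log p̃(v,h)] − E_{p(h|v)}[∇_v log p̃(v,h)]‖₂ ≤ κ · √(F(q‖p(·|v))); i.e., the bias of VaES is bounded by the square root of the Fisher divergence between the variational posterior and the true posterior up to a constant. -/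
open MeasureTheory Filter Topology
open scoped RealInnerProductSpace ENNReal

/-- The divergence `∇·f` of a vector field `f : ℝⁿ → ℝⁿ`, i.e. the trace of its Jacobian. -/
noncomputable def vdiv {n : ℕ} (f : EuclideanSpace ℝ (Fin n) → EuclideanSpace ℝ (Fin n))
    (x : EuclideanSpace ℝ (Fin n)) : ℝ :=
  LinearMap.trace ℝ (EuclideanSpace ℝ (Fin n)) (fderiv ℝ f x).toLinearMap

/-- The Stein operator `(S_p g)(x) = ⟨∇ log p(x), g(x)⟩ + tr(Dg(x))`. -/
noncomputable def steinOp {n : ℕ} (p : EuclideanSpace ℝ (Fin n) → ℝ)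
    (g : EuclideanSpace ℝ (Fin n) → EuclideanSpace ℝ (Fin n))
    (x : EuclideanSpace ℝ (Fin n)) : ℝ :=
  ⟪gradient (fun y => Real.log (p y)) x, g x⟫ + vdiv g x

/-- The Fisher divergence `F(q‖p) = ∫ q(x) ‖∇ log q(x) − ∇ log p(x)‖₂² dx` (as an extended
nonnegative real, so that it is `+∞` when the integral diverges). -/
noncomputable def fisherDivL {n : ℕ} (q p : EuclideanSpace ℝ (Fin n) → ℝ) : ℝ≥0∞ :=
  ∫⁻ x, ENNReal.ofReal (q x *
    ‖gradient (fun y => Real.log (q y)) x - gradient (fun y => Real.log (p y)) x‖ ^ 2)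

section Aux
open Set

lemma clm_trace_eq_sum {n : ℕ} (A : EuclideanSpace ℝ (Fin n) →L[ℝ] EuclideanSpace ℝ (Fin n)) :
    LinearMap.trace ℝ _ A.toLinearMap = ∑ i, A (EuclideanSpace.single i 1) i := by
  rw [LinearMap.trace_eq_matrix_trace ℝ (EuclideanSpace.basisFun (Fin n) ℝ).toBasis]
  simp [Matrix.trace, LinearMap.toMatrix_apply, Matrix.diag]

lemma vdiv_eq_sum {n : ℕ} (f : EuclideanSpace ℝ (Fin n) → EuclideanSpace ℝ (Fin n))
    (x : EuclideanSpace ℝ (Fin n)) :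
    vdiv f x = ∑ i, fderiv ℝ f x (EuclideanSpace.single i 1) i :=
  clm_trace_eq_sum _

lemma clm_trace_smulRight {n : ℕ} (L : EuclideanSpace ℝ (Fin n) →L[ℝ] ℝ)
    (v : EuclideanSpace ℝ (Fin n)) :
    LinearMap.trace ℝ _ (L.smulRight v).toLinearMap = L v := by
  rw [clm_trace_eq_sum]
  have hv : ∑ i, v i • EuclideanSpace.single i (1:ℝ) = v := by
    simpa [EuclideanSpace.basisFun_repr] using
      (EuclideanSpace.basisFun (Fin n) ℝ).toBasis.sum_repr v
  calc ∑ i, (L.smulRight v) (EuclideanSpace.single i 1) i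
      = ∑ i, L (v i • EuclideanSpace.single i (1:ℝ)) := by
        simp [ContinuousLinearMap.smulRight_apply, mul_comm]
    _ = L v := by rw [← map_sum, hv]

lemma vdiv_smul {n : ℕ} {q : EuclideanSpace ℝ (Fin n) → ℝ}
    {g : EuclideanSpace ℝ (Fin n) → EuclideanSpace ℝ (Fin n)} {x : EuclideanSpace ℝ (Fin n)}
    (hq : DifferentiableAt ℝ q x) (hg : DifferentiableAt ℝ g x) :
    vdiv (fun y => q y • g y) x = ⟪gradient q x, g x⟫ + q x * vdiv g x := by
  have hinner : ⟪gradient q x, g x⟫ = fderiv ℝ q x (g x) := by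
    rw [gradient, InnerProductSpace.toDual_symm_apply]
  unfold vdiv
  rw [fderiv_fun_smul hq hg]
  simp only [ContinuousLinearMap.coe_add, ContinuousLinearMap.coe_smul, map_add,
    LinearMap.map_smul_of_tower, smul_eq_mul]
  rw [clm_trace_smulRight, hinner]
  ring

lemma gradient_log_comp {n : ℕ} {q : EuclideanSpace ℝ (Fin n) → ℝ} {x : EuclideanSpace ℝ (Fin n)}
    (hq : DifferentiableAt ℝ q x) (hqx : q x ≠ 0) :
    gradient (fun y => Real.log (q y)) x = (q x)⁻¹ • gradient q x := by
  have h1 : HasFDerivAt (fun y => Real.log (q y)) ((q x)⁻¹ • fderiv ℝ q x) x :=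
    (Real.hasDerivAt_log hqx).comp_hasFDerivAt x hq.hasFDerivAt
  rw [gradient, h1.fderiv]; exact (InnerProductSpace.toDual ℝ _).symm.map_smul _ _

lemma q_mul_stein {n : ℕ} {p q : EuclideanSpace ℝ (Fin n) → ℝ}
    {g : EuclideanSpace ℝ (Fin n) → EuclideanSpace ℝ (Fin n)} {x : EuclideanSpace ℝ (Fin n)}
    (hqd : DifferentiableAt ℝ q x) (hgd : DifferentiableAt ℝ g x) (hqx : 0 < q x) :
    q x * steinOp p g x
      = vdiv (fun y => q y • g y) x
        + q x * ⟪gradient (fun y => Real.log (p y)) x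
            - gradient (fun y => Real.log (q y)) x, g x⟫ := by
  rw [steinOp, vdiv_smul hqd hgd, gradient_log_comp hqd hqx.ne', inner_sub_left,
    real_inner_smul_left]
  field_simp
  ring


open MeasureTheory Filter Topology Set

section DivThm

variable {m : ℕ}

/-- lintegral of the norm over a full hyperplane slice. -/
noncomputable def sliceL (f : (Fin (m+1) → ℝ) → (Fin (m+1) → ℝ)) (i : Fin (m+1)) (r : ℝ) : ENNReal :=
  ∫⁻ y : Fin m → ℝ, ENNReal.ofReal ‖f (i.insertNth r y)‖

lemma lintegral_sliceL (f : (Fin (m+1) → ℝ) → (Fin (m+1) → ℝ)) (hf : Continuous f)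
    (i : Fin (m+1)) :
    ∫⁻ r : ℝ, sliceL f i r = ∫⁻ x, ENNReal.ofReal ‖f x‖ := by
  have hN : Measurable fun x : Fin (m+1) → ℝ => ENNReal.ofReal ‖f x‖ :=
    (hf.norm.measurable).ennreal_ofReal
  have hins : Continuous fun z : ℝ × (Fin m → ℝ) => f (i.insertNth z.1 z.2) :=
    hf.comp (Continuous.finInsertNth (A := fun _ : Fin (m+1) => ℝ) i continuous_fst continuous_snd)
  have hmp := MeasureTheory.volume_preserving_piFinSuccAbove (fun _ : Fin (m+1) => ℝ) i
  have h1 : ∫⁻ x, ENNReal.ofReal ‖f x‖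
      = ∫⁻ z : ℝ × (Fin m → ℝ), ENNReal.ofReal ‖f (i.insertNth z.1 z.2)‖ := by
    rw [← hmp.lintegral_comp (f := fun z : ℝ × (Fin m → ℝ) => ENNReal.ofReal ‖f (i.insertNth z.1 z.2)‖)]
    · congr 1
      funext a
      rw [show i.insertNth ((MeasurableEquiv.piFinSuccAbove (fun _ => ℝ) i) a).1
            ((MeasurableEquiv.piFinSuccAbove (fun _ => ℝ) i) a).2
          = (MeasurableEquiv.piFinSuccAbove (fun _ => ℝ) i).symm
            ((MeasurableEquiv.piFinSuccAbove (fun _ => ℝ) i) a) from rfl,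
        MeasurableEquiv.symm_apply_apply]
    · exact hins.norm.measurable.ennreal_ofReal
  rw [h1, Measure.volume_eq_prod,
    lintegral_prod (fun z : ℝ × (Fin m → ℝ) => ENNReal.ofReal ‖f (i.insertNth z.1 z.2)‖)
      hins.norm.measurable.ennreal_ofReal.aemeasurable]
  rfl



/-- lintegral of the norm over a face of the box of radius `R`. -/
noncomputable def boxL (f : (Fin (m+1) → ℝ) → (Fin (m+1) → ℝ)) (i : Fin (m+1)) (c : ℝ → ℝ)
    (R : ℝ) : ENNReal :=
  ∫⁻ y in Icc (fun _ : Fin m => -R) (fun _ => R), ENNReal.ofReal ‖f (i.insertNth (c R) y)‖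

lemma boxL_le_sliceL (f : (Fin (m+1) → ℝ) → (Fin (m+1) → ℝ)) (i : Fin (m+1)) (c : ℝ → ℝ)
    (R : ℝ) : boxL f i c R ≤ sliceL f i (c R) :=
  setLIntegral_le_lintegral _ _

lemma boxL_measurable (f : (Fin (m+1) → ℝ) → (Fin (m+1) → ℝ)) (hf : Continuous f)
    (i : Fin (m+1)) (c : ℝ → ℝ) (hc : Continuous c) :
    Measurable (boxL f i c) := by
  have heq : boxL f i c = fun R => ∫⁻ y, (Icc (fun _ : Fin m => -R) (fun _ => R)).indicator
      (fun y => ENNReal.ofReal ‖f (i.insertNth (c R) y)‖) y := by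
    funext R
    rw [lintegral_indicator measurableSet_Icc]
    rfl
  rw [heq]
  apply Measurable.lintegral_prod_right
  have hSet : MeasurableSet {z : ℝ × (Fin m → ℝ) |
      z.2 ∈ Icc (fun _ : Fin m => -z.1) (fun _ => z.1)} := by
    have h2 : {z : ℝ × (Fin m → ℝ) | z.2 ∈ Icc (fun _ : Fin m => -z.1) (fun _ => z.1)}
        = ⋂ j, ({z : ℝ × (Fin m → ℝ) | -z.1 ≤ z.2 j} ∩ {z | z.2 j ≤ z.1}) := by
      ext z
      simp [Set.mem_Icc, Pi.le_def, forall_and, Set.mem_iInter]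
    rw [h2]
    refine MeasurableSet.iInter fun j => MeasurableSet.inter ?_ ?_ <;>
      apply measurableSet_le <;> fun_prop
  have huncurry : (Function.uncurry fun (R : ℝ) (y : Fin m → ℝ) =>
        (Icc (fun _ : Fin m => -R) (fun _ => R)).indicator
          (fun y => ENNReal.ofReal ‖f (i.insertNth (c R) y)‖) y)
      = {z : ℝ × (Fin m → ℝ) | z.2 ∈ Icc (fun _ : Fin m => -z.1) (fun _ => z.1)}.indicator
          (fun z => ENNReal.ofReal ‖f (i.insertNth (c z.1) z.2)‖) := by
    funext z
    by_cases h : z.2 ∈ Icc (fun _ : Fin m => -z.1) (fun _ => z.1) <;>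
      · have h' := h
        simp only [Set.mem_Icc] at h'
        simp [Function.uncurry, Set.indicator_apply, Set.mem_Icc, Set.mem_setOf_eq, h, h']
  rw [huncurry]
  exact Measurable.indicator
    ((hf.comp ((hc.comp continuous_fst).finInsertNth
        (A := fun _ : Fin (m+1) => ℝ) i continuous_snd)).norm.measurable.ennreal_ofReal) hSet

lemma lintegral_boxL_front_le (f : (Fin (m+1) → ℝ) → (Fin (m+1) → ℝ)) (hf : Continuous f)
    (i : Fin (m+1)) :
    (∫⁻ R in Ioi (0:ℝ), boxL f i id R) ≤ ∫⁻ x, ENNReal.ofReal ‖f x‖ := by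
  calc (∫⁻ R in Ioi (0:ℝ), boxL f i id R) ≤ ∫⁻ R in Ioi (0:ℝ), sliceL f i R :=
        lintegral_mono fun R => boxL_le_sliceL f i id R
    _ ≤ ∫⁻ R : ℝ, sliceL f i R := setLIntegral_le_lintegral _ _
    _ = _ := lintegral_sliceL f hf i

lemma lintegral_boxL_back_le (f : (Fin (m+1) → ℝ) → (Fin (m+1) → ℝ)) (hf : Continuous f)
    (i : Fin (m+1)) :
    (∫⁻ R in Ioi (0:ℝ), boxL f i Neg.neg R) ≤ ∫⁻ x, ENNReal.ofReal ‖f x‖ := by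
  have h1 : (∫⁻ R in Ioi (0:ℝ), sliceL f i (-R)) = ∫⁻ R in (Neg.neg '' Ioi (0:ℝ)), sliceL f i R :=
    (Measure.measurePreserving_neg volume).setLIntegral_comp_emb
      (MeasurableEquiv.neg ℝ).measurableEmbedding (sliceL f i) (Ioi 0)
  calc (∫⁻ R in Ioi (0:ℝ), boxL f i Neg.neg R) ≤ ∫⁻ R in Ioi (0:ℝ), sliceL f i (-R) :=
        lintegral_mono fun R => boxL_le_sliceL f i Neg.neg R
    _ = ∫⁻ R in (Neg.neg '' Ioi (0:ℝ)), sliceL f i R := h1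
    _ ≤ ∫⁻ R : ℝ, sliceL f i R := setLIntegral_le_lintegral _ _
    _ = _ := lintegral_sliceL f hf i

lemma box_identity (f : (Fin (m+1) → ℝ) → (Fin (m+1) → ℝ)) (hf : ContDiff ℝ 1 f)
    (hdi : Integrable (fun x => ∑ i, fderiv ℝ f x (Pi.single i 1) i)) (R : ℝ) (hR : 0 ≤ R) :
    ∫ x in Icc (fun _ : Fin (m+1) => -R) (fun _ => R), (∑ i, fderiv ℝ f x (Pi.single i 1) i)
      = ∑ i : Fin (m+1),
          ((∫ y in Icc (fun _ : Fin m => -R) (fun _ => R), f (i.insertNth R y) i)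
          - ∫ y in Icc (fun _ : Fin m => -R) (fun _ => R), f (i.insertNth (-R) y) i) := by
  have hle : (fun _ : Fin (m+1) => -R) ≤ fun _ => R := fun _ => neg_le_self hR
  have := integral_divergence_of_hasFDerivAt_off_countable
      (fun _ => -R) (fun _ => R) hle f (fderiv ℝ f) ∅ Set.countable_empty
      hf.continuous.continuousOn
      (fun x _ => (hf.differentiable one_ne_zero x).hasFDerivAt)
      (hdi.integrableOn)
  simpa [Function.comp_def] using this

lemma pi_integral_div_eq_zero
    (f : (Fin (m+1) → ℝ) → (Fin (m+1) → ℝ))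
    (hf : ContDiff ℝ 1 f) (hfi : Integrable f)
    (hdi : Integrable (fun x => ∑ i, fderiv ℝ f x (Pi.single i 1) i)) :
    ∫ x, ∑ i, fderiv ℝ f x (Pi.single i 1) i = 0 := by
  set D : (Fin (m+1) → ℝ) → ℝ := fun x => ∑ i, fderiv ℝ f x (Pi.single i 1) i with hD
  set Ψ : ℝ → ENNReal := fun R => ∑ i : Fin (m+1), (boxL f i id R + boxL f i Neg.neg R) with hΨ
  have hbm : ∀ (i : Fin (m+1)) (c : ℝ → ℝ), Continuous c → Measurable (boxL f i c) :=
    fun i c hc => boxL_measurable f hf.continuous i c hc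
  have hΨmeas : Measurable Ψ :=
    Finset.measurable_sum _ fun i _ =>
      ((hbm i id continuous_id).add (hbm i Neg.neg continuous_neg))
  have hM : (∫⁻ x, ENNReal.ofReal ‖f x‖) < ⊤ := by
    have h := hfi.hasFiniteIntegral
    simpa [HasFiniteIntegral, ofReal_norm] using h
  have hΨint : (∫⁻ R in Ioi (0:ℝ), Ψ R) < ⊤ := by
    rw [hΨ]
    rw [lintegral_finsetSum (f := fun i R => boxL f i id R + boxL f i Neg.neg R) _ fun i _ =>
      ((hbm i id continuous_id).add (hbm i Neg.neg continuous_neg))]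
    have hbound : ∀ i : Fin (m+1),
        (∫⁻ R in Ioi (0:ℝ), (boxL f i id R + boxL f i Neg.neg R))
          < ⊤ := by
      intro i
      rw [lintegral_add_left (hbm i id continuous_id)]
      exact lt_of_le_of_lt (add_le_add (lintegral_boxL_front_le f hf.continuous i)
        (lintegral_boxL_back_le f hf.continuous i)) (by simpa using ENNReal.add_lt_top.mpr ⟨hM, hM⟩)
    exact ENNReal.sum_lt_top.mpr fun i _ => hbound i
  have hgood : ∀ r0 ε : ℝ, 0 < ε → ∃ R, r0 < R ∧ 0 ≤ R ∧ Ψ R < ENNReal.ofReal ε := by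
    intro r0 ε hε
    by_contra hcon
    push_neg at hcon
    set r1 := max r0 0 with hr1
    have hsub : ∀ R ∈ Ioi r1, ENNReal.ofReal ε ≤ Ψ R := by
      intro R hR
      have h1 : r0 < R := lt_of_le_of_lt (le_max_left _ _) hR
      have h2 : (0:ℝ) ≤ R := le_of_lt (lt_of_le_of_lt (le_max_right _ _) hR)
      exact hcon R h1 h2
    have hbig : (ENNReal.ofReal ε) * volume (Ioi r1) ≤ ∫⁻ R in Ioi r1, Ψ R := by
      rw [← setLIntegral_const]
      exact setLIntegral_mono hΨmeas hsub
    rw [Real.volume_Ioi, ENNReal.mul_top (by simpa using (ENNReal.ofReal_pos.mpr hε).ne')] at hbig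
    have hle2 : (∫⁻ R in Ioi r1, Ψ R) ≤ ∫⁻ R in Ioi 0, Ψ R :=
      lintegral_mono' (Measure.restrict_mono (Ioi_subset_Ioi (le_max_right r0 0)) le_rfl) le_rfl
    exact absurd (lt_of_le_of_lt (le_trans hbig hle2) hΨint) (lt_irrefl _)
  set s : ℕ → Set (Fin (m+1) → ℝ) := fun k => Icc (fun _ => -(k:ℝ)) (fun _ => (k:ℝ)) with hs
  have hsmeas : ∀ k, MeasurableSet (s k) := fun k => measurableSet_Icc
  have hsmono : Monotone s := by
    intro k l hkl
    apply Icc_subset_Icc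
    · intro j
      simp only
      exact neg_le_neg (by exact_mod_cast hkl)
    · intro j
      simp only
      exact_mod_cast hkl
  have hsU : ⋃ k, s k = univ := by
    ext x
    simp only [Set.mem_iUnion, Set.mem_univ, iff_true]
    obtain ⟨k, hk⟩ := exists_nat_ge ‖x‖
    refine ⟨k, fun j => ?_, fun j => ?_⟩
    · have := (abs_le.mp (le_trans (norm_le_pi_norm x j) hk)).1
      simpa using this
    · have := (abs_le.mp (le_trans (norm_le_pi_norm x j) hk)).2
      simpa using this
  have htail : Tendsto (fun k => ∫ x in (s k)ᶜ, ‖D x‖) atTop (𝓝 0) := by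
    have h1 : Tendsto (fun k => ∫ x in s k, ‖D x‖) atTop (𝓝 (∫ x, ‖D x‖)) := by
      have := tendsto_setIntegral_of_monotone hsmeas hsmono
        (by rw [hsU]; exact hdi.norm.integrableOn)
      rwa [hsU, setIntegral_univ] at this
    have h2 : ∀ k, ∫ x in (s k)ᶜ, ‖D x‖ = (∫ x, ‖D x‖) - ∫ x in s k, ‖D x‖ := fun k => by
      rw [← integral_add_compl (hsmeas k) hdi.norm]
      ring
    simp_rw [h2]
    have := (tendsto_const_nhds (x := (∫ x, ‖D x‖)) (f := atTop (α := ℕ))).sub h1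
    simpa using this
  have main : ∀ ε : ℝ, 0 < ε → |∫ x, D x| ≤ 2 * ε := by
    intro ε hε
    obtain ⟨k0, hk0⟩ : ∃ k0 : ℕ, ∫ x in (s k0)ᶜ, ‖D x‖ < ε :=
      (htail.eventually (gt_mem_nhds hε)).exists
    obtain ⟨R, hRr, hR0, hΨR⟩ := hgood (max (k0:ℝ) 0) ε hε
    have hbox := box_identity f hf hdi R hR0
    have hΨfin : Ψ R ≠ ⊤ := ne_top_of_lt hΨR
    have htermfin : ∀ i : Fin (m+1), boxL f i id R + boxL f i Neg.neg R ≠ ⊤ := fun i =>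
      ne_top_of_le_ne_top hΨfin
        (Finset.single_le_sum (f := fun i => boxL f i id R + boxL f i Neg.neg R)
          (fun _ _ => zero_le) (Finset.mem_univ i))
    have hback : ∀ (i : Fin (m+1)) (c : ℝ → ℝ), boxL f i c R ≠ ⊤ →
        |∫ y in Icc (fun _ : Fin m => -R) (fun _ => R), f (i.insertNth (c R) y) i|
          ≤ (boxL f i c R).toReal := by
      intro i c hfin
      have h1 := norm_integral_le_lintegral_norm
        (μ := volume.restrict (Icc (fun _ : Fin m => -R) (fun _ => R)))
        (fun y => f (i.insertNth (c R) y) i)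
      rw [Real.norm_eq_abs] at h1
      refine le_trans h1 (ENNReal.toReal_mono hfin (lintegral_mono fun y => ?_))
      exact ENNReal.ofReal_le_ofReal
        (by simpa [Real.norm_eq_abs] using norm_le_pi_norm (f (i.insertNth (c R) y)) i)
    have hstep : ∀ i : Fin (m+1),
        |(∫ y in Icc (fun _ : Fin m => -R) (fun _ => R), f (i.insertNth R y) i)
          - ∫ y in Icc (fun _ : Fin m => -R) (fun _ => R), f (i.insertNth (-R) y) i|
          ≤ (boxL f i id R + boxL f i Neg.neg R).toReal := by
      intro i
      have hfa : boxL f i id R ≠ ⊤ := ne_top_of_le_ne_top (htermfin i) le_self_add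
      have hfb : boxL f i Neg.neg R ≠ ⊤ := ne_top_of_le_ne_top (htermfin i) le_add_self
      have ha := hback i id hfa
      have hb := hback i Neg.neg hfb
      simp only [id_eq] at ha
      rw [ENNReal.toReal_add hfa hfb]
      calc |(∫ y in Icc (fun _ : Fin m => -R) (fun _ => R), f (i.insertNth R y) i)
            - ∫ y in Icc (fun _ : Fin m => -R) (fun _ => R), f (i.insertNth (-R) y) i|
          ≤ |∫ y in Icc (fun _ : Fin m => -R) (fun _ => R), f (i.insertNth R y) i|
            + |∫ y in Icc (fun _ : Fin m => -R) (fun _ => R), f (i.insertNth (-R) y) i| := by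
            rw [sub_eq_add_neg]
            exact le_trans (abs_add_le _ _) (by rw [abs_neg])
        _ ≤ _ := add_le_add ha hb
    have hflux : |∑ i : Fin (m+1),
        ((∫ y in Icc (fun _ : Fin m => -R) (fun _ => R), f (i.insertNth R y) i)
          - ∫ y in Icc (fun _ : Fin m => -R) (fun _ => R), f (i.insertNth (-R) y) i)| ≤ ε := by
      calc |∑ i : Fin (m+1),
          ((∫ y in Icc (fun _ : Fin m => -R) (fun _ => R), f (i.insertNth R y) i)
            - ∫ y in Icc (fun _ : Fin m => -R) (fun _ => R), f (i.insertNth (-R) y) i)|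
          ≤ ∑ i : Fin (m+1), |(∫ y in Icc (fun _ : Fin m => -R) (fun _ => R), f (i.insertNth R y) i)
            - ∫ y in Icc (fun _ : Fin m => -R) (fun _ => R), f (i.insertNth (-R) y) i| :=
            Finset.abs_sum_le_sum_abs _ _
        _ ≤ ∑ i : Fin (m+1), (boxL f i id R + boxL f i Neg.neg R).toReal :=
            Finset.sum_le_sum fun i _ => hstep i
        _ = (Ψ R).toReal := (ENNReal.toReal_sum fun i _ => htermfin i).symm
        _ ≤ ε := ENNReal.toReal_le_of_le_ofReal hε.le hΨR.le
    have hsubk : s k0 ⊆ Icc (fun _ : Fin (m+1) => -R) (fun _ => R) := by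
      have hkR : (k0:ℝ) ≤ R := le_of_lt (lt_of_le_of_lt (le_max_left _ _) hRr)
      apply Icc_subset_Icc
      · intro j
        simp only
        linarith
      · intro j
        simp only
        linarith
    have htailR : |∫ x in (Icc (fun _ : Fin (m+1) => -R) (fun _ => R))ᶜ, D x| ≤ ε := by
      have h1 : |∫ x in (Icc (fun _ : Fin (m+1) => -R) (fun _ => R))ᶜ, D x|
          ≤ ∫ x in (Icc (fun _ : Fin (m+1) => -R) (fun _ => R))ᶜ, ‖D x‖ := by
        simpa [Real.norm_eq_abs] using norm_integral_le_integral_norm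
          (μ := volume.restrict (Icc (fun _ : Fin (m+1) => -R) (fun _ => R))ᶜ) D
      refine le_trans h1 (le_trans (setIntegral_mono_set hdi.norm.integrableOn
        (Eventually.of_forall fun x => norm_nonneg _)
        (HasSubset.Subset.eventuallyLE (compl_subset_compl.mpr hsubk))) hk0.le)
    have hsplit : ∫ x, D x = (∫ x in Icc (fun _ : Fin (m+1) => -R) (fun _ => R), D x)
        + ∫ x in (Icc (fun _ : Fin (m+1) => -R) (fun _ => R))ᶜ, D x :=
      (integral_add_compl measurableSet_Icc hdi).symm
    calc |∫ x, D x| = |(∫ x in Icc (fun _ : Fin (m+1) => -R) (fun _ => R), D x)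
          + ∫ x in (Icc (fun _ : Fin (m+1) => -R) (fun _ => R))ᶜ, D x| := by rw [← hsplit]
      _ ≤ |∫ x in Icc (fun _ : Fin (m+1) => -R) (fun _ => R), D x|
          + |∫ x in (Icc (fun _ : Fin (m+1) => -R) (fun _ => R))ᶜ, D x| := abs_add_le _ _
      _ ≤ ε + ε := add_le_add (by
            rw [show (∫ x in Icc (fun _ : Fin (m+1) => -R) (fun _ => R), D x) = _ from hbox]
            exact hflux) htailR
      _ = 2 * ε := by ring
  by_contra h0
  have habs : 0 < |∫ x, D x| := abs_pos.mpr h0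
  linarith [main (|∫ x, D x| / 4) (by positivity)]

end DivThm


lemma integral_vdiv_eq_zero {n : ℕ} (f : EuclideanSpace ℝ (Fin n) → EuclideanSpace ℝ (Fin n))
    (hf : ContDiff ℝ 1 f) (hfi : Integrable f) (hdi : Integrable (vdiv f)) :
    ∫ x, vdiv f x = 0 := by
  cases n with
  | zero =>
    have : ∀ x, vdiv f x = 0 := fun x => by rw [vdiv_eq_sum]; simp
    simp [this]
  | succ m =>
    set eL := PiLp.continuousLinearEquiv 2 ℝ (fun _ : Fin (m+1) => ℝ) with heL
    have hMP := EuclideanSpace.volume_preserving_symm_measurableEquiv_toLp (Fin (m+1))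
    have hMPs := MeasurePreserving.symm _ hMP
    have hcoe : ⇑(MeasurableEquiv.toLp 2 (Fin (m+1) → ℝ)).symm = ⇑eL := rfl
    have hcoes : ⇑(MeasurableEquiv.toLp 2 (Fin (m+1) → ℝ)).symm.symm = ⇑eL.symm := rfl
    set g : (Fin (m+1) → ℝ) → (Fin (m+1) → ℝ) := fun y => eL (f (eL.symm y)) with hg
    have hgC : ContDiff ℝ 1 g :=
      (eL : EuclideanSpace ℝ (Fin (m+1)) →L[ℝ] (Fin (m+1) → ℝ)).contDiff.comp
        (hf.comp (eL.symm : (Fin (m+1) → ℝ) →L[ℝ] EuclideanSpace ℝ (Fin (m+1))).contDiff)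
    have hkey : ∀ y : Fin (m+1) → ℝ,
        (∑ i, fderiv ℝ g y (Pi.single i 1) i) = vdiv f (eL.symm y) := by
      intro y
      have hdf : HasFDerivAt g
          (((eL : EuclideanSpace ℝ (Fin (m+1)) →L[ℝ] (Fin (m+1) → ℝ)).comp
            (fderiv ℝ f (eL.symm y))).comp
            (eL.symm : (Fin (m+1) → ℝ) →L[ℝ] EuclideanSpace ℝ (Fin (m+1)))) y := by
        have h1 : HasFDerivAt (fun y : Fin (m+1) → ℝ => f (eL.symm y))
            ((fderiv ℝ f (eL.symm y)).comp
              (eL.symm : (Fin (m+1) → ℝ) →L[ℝ] EuclideanSpace ℝ (Fin (m+1)))) y :=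
          ((hf.differentiable one_ne_zero) (eL.symm y)).hasFDerivAt.comp y
            (eL.symm : (Fin (m+1) → ℝ) →L[ℝ] EuclideanSpace ℝ (Fin (m+1))).hasFDerivAt
        exact ((eL : EuclideanSpace ℝ (Fin (m+1)) →L[ℝ] (Fin (m+1) → ℝ)).hasFDerivAt).comp y h1
      rw [hdf.fderiv, vdiv_eq_sum]
      rfl
    have hgi : Integrable g := by
      have h1 : Integrable (fun y : Fin (m+1) → ℝ => f (eL.symm y)) := by
        rw [show (fun y : Fin (m+1) → ℝ => f (eL.symm y))
            = f ∘ ⇑(MeasurableEquiv.toLp 2 (Fin (m+1) → ℝ)).symm.symm by rw [hcoes]; rfl]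
        exact (hMPs.integrable_comp_emb
          (MeasurableEquiv.toLp 2 (Fin (m+1) → ℝ)).symm.symm.measurableEmbedding).mpr hfi
      exact (eL : EuclideanSpace ℝ (Fin (m+1)) →L[ℝ] (Fin (m+1) → ℝ)).integrable_comp h1
    have hgd : Integrable (fun y => ∑ i, fderiv ℝ g y (Pi.single i 1) i) := by
      rw [show (fun y => ∑ i, fderiv ℝ g y (Pi.single i 1) i)
          = (vdiv f) ∘ ⇑(MeasurableEquiv.toLp 2 (Fin (m+1) → ℝ)).symm.symm by
        funext y; rw [Function.comp_apply, hcoes]; exact hkey y]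
      exact (hMPs.integrable_comp_emb
        (MeasurableEquiv.toLp 2 (Fin (m+1) → ℝ)).symm.symm.measurableEmbedding).mpr hdi
    have hzero := pi_integral_div_eq_zero g hgC hgi hgd
    have htrans : ∫ x, vdiv f x = ∫ y, ∑ i, fderiv ℝ g y (Pi.single i 1) i := by
      rw [← hMPs.integral_comp
        (MeasurableEquiv.toLp 2 (Fin (m+1) → ℝ)).symm.symm.measurableEmbedding (vdiv f)]
      congr 1
      funext y
      rw [hcoes]
      exact (hkey y).symm
    rw [htrans, hzero]


open scoped RealInnerProductSpace ENNReal in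
lemma vaes_core {d n : ℕ} (phat : EuclideanSpace ℝ (Fin n) → ℝ)
    (s : EuclideanSpace ℝ (Fin n) → EuclideanSpace ℝ (Fin d))
    (q : EuclideanSpace ℝ (Fin n) → ℝ)
    (hq : ContDiff ℝ 1 q) (hqpos : ∀ h, 0 < q h) (hqnorm : ∫ h, q h = 1)
    (hphatC : ContDiff ℝ 1 phat) (hphatpos : ∀ h, 0 < phat h)
    (g : Fin d → EuclideanSpace ℝ (Fin n) → EuclideanSpace ℝ (Fin n))
    (hgC : ∀ i, ContDiff ℝ 1 (g i))
    (hstein : ∀ i h, steinOp phat (g i) h = s h i - ∫ h', phat h' * s h' i)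
    (hdiv : ∀ i, Integrable (vdiv fun h => q h • g i h))
    (hkfin : ∀ i, Integrable (fun h => q h * ‖g i h‖ ^ 2))
    (hq_exp : Integrable (fun h => q h • s h))
    (hp_exp : Integrable (fun h => phat h • s h)) :
    (‖(∫ h, q h • s h) - ∫ h, phat h • s h‖₊ : ℝ≥0∞)
      ≤ ENNReal.ofReal (Real.sqrt (∑ i, ∫ h, q h * ‖g i h‖ ^ 2)) *
        (fisherDivL q phat) ^ (2⁻¹ : ℝ) := by
  have hqInt : Integrable q := by
    by_contra hc
    rw [integral_undef hc] at hqnorm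
    norm_num at hqnorm
  have hq1 : Differentiable ℝ q := hq.differentiable one_ne_zero
  set Δ : EuclideanSpace ℝ (Fin n) → EuclideanSpace ℝ (Fin n) := fun h =>
    gradient (fun y => Real.log (phat y)) h - gradient (fun y => Real.log (q y)) h with hΔdef
  have hlogqC : ContDiff ℝ 1 fun y => Real.log (q y) := hq.log fun y => (hqpos y).ne'
  have hlogpC : ContDiff ℝ 1 fun y => Real.log (phat y) := hphatC.log fun y => (hphatpos y).ne'
  have hgradq_cont : Continuous fun h => gradient (fun y => Real.log (q y)) h := by
    rw [show (fun h => gradient (fun y => Real.log (q y)) h)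
        = fun h => (InnerProductSpace.toDual ℝ _).symm (fderiv ℝ (fun y => Real.log (q y)) h)
        from rfl]
    exact (InnerProductSpace.toDual ℝ _).symm.continuous.comp (hlogqC.continuous_fderiv one_ne_zero)
  have hgradp_cont : Continuous fun h => gradient (fun y => Real.log (phat y)) h := by
    rw [show (fun h => gradient (fun y => Real.log (phat y)) h)
        = fun h => (InnerProductSpace.toDual ℝ _).symm (fderiv ℝ (fun y => Real.log (phat y)) h)
        from rfl]
    exact (InnerProductSpace.toDual ℝ _).symm.continuous.comp (hlogpC.continuous_fderiv one_ne_zero)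
  have hΔcont : Continuous Δ := hgradp_cont.sub hgradq_cont
  set c : Fin d → ℝ := fun i => ∫ h', phat h' * s h' i with hcdef
  have hqsInt : ∀ i, Integrable fun h => q h * s h i := by
    intro i
    have := (EuclideanSpace.proj (𝕜 := ℝ) i).integrable_comp hq_exp
    simpa [smul_eq_mul] using this
  have hsteinInt : ∀ i, Integrable fun h => q h * steinOp phat (g i) h := by
    intro i
    have heq : (fun h => q h * steinOp phat (g i) h) = fun h => q h * s h i - q h * c i := by
      funext h
      rw [hstein i h]
      ring
    rw [heq]
    exact (hqsInt i).sub (hqInt.mul_const _)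
  have hinnerInt : ∀ i, Integrable fun h => q h * ⟪Δ h, g i h⟫ := by
    intro i
    have heq : (fun h => q h * ⟪Δ h, g i h⟫)
        = fun h => q h * steinOp phat (g i) h - vdiv (fun h' => q h' • g i h') h := by
      funext h
      rw [q_mul_stein (hq1 h) ((hgC i).differentiable one_ne_zero h) (hqpos h)]
      ring
    rw [heq]
    exact (hsteinInt i).sub (hdiv i)
  have hqgInt : ∀ i, Integrable fun h => q h • g i h := by
    intro i
    refine Integrable.mono' ((hqInt.add (hkfin i)).div_const 2)
      ((hq.continuous.smul (hgC i).continuous)).aestronglyMeasurable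
      (Filter.Eventually.of_forall fun h => ?_)
    have h1 : ‖q h • g i h‖ = q h * ‖g i h‖ := by
      rw [norm_smul, Real.norm_eq_abs, abs_of_pos (hqpos h)]
    rw [h1]
    simp only [Pi.add_apply]
    nlinarith [mul_nonneg (hqpos h).le (sq_nonneg (‖g i h‖ - 1))]
  have hkey : ∀ i : Fin d,
      ((∫ h, q h • s h) - ∫ h, phat h • s h) i = ∫ h, q h * ⟪Δ h, g i h⟫ := by
    intro i
    have h1 : ((∫ h, q h • s h) - ∫ h, phat h • s h) i
        = (∫ h, q h * s h i) - ∫ h, phat h * s h i := by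
      rw [PiLp.sub_apply]
      congr 1
      · have := (EuclideanSpace.proj (𝕜 := ℝ) i).integral_comp_comm hq_exp
        simpa [smul_eq_mul] using this.symm
      · have := (EuclideanSpace.proj (𝕜 := ℝ) i).integral_comp_comm hp_exp
        simpa [smul_eq_mul] using this.symm
    rw [h1]
    have h2 : (∫ h, q h * s h i) - c i = ∫ h, (q h * s h i - q h * c i) := by
      rw [integral_sub (hqsInt i) (hqInt.mul_const _), integral_mul_const, hqnorm, one_mul]
    have h3 : ∀ h, q h * s h i - q h * c i
        = vdiv (fun h' => q h' • g i h') h + q h * ⟪Δ h, g i h⟫ := by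
      intro h
      have h4 := q_mul_stein (p := phat) (hq1 h) ((hgC i).differentiable one_ne_zero h) (hqpos h)
      rw [hstein i h] at h4
      nlinarith [h4]
    calc (∫ h, q h * s h i) - ∫ h, phat h * s h i
        = ∫ h, (q h * s h i - q h * c i) := h2
      _ = ∫ h, (vdiv (fun h' => q h' • g i h') h + q h * ⟪Δ h, g i h⟫) := by
          exact integral_congr_ae (Filter.Eventually.of_forall h3)
      _ = (∫ h, vdiv (fun h' => q h' • g i h') h) + ∫ h, q h * ⟪Δ h, g i h⟫ :=
          integral_add (hdiv i) (hinnerInt i)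
      _ = ∫ h, q h * ⟪Δ h, g i h⟫ := by
          rw [integral_vdiv_eq_zero (fun h' => q h' • g i h') (hq.smul (hgC i)) (hqgInt i) (hdiv i), zero_add]
  have hAnn : ∀ i, (0:ℝ) ≤ ∫ h, q h * ‖g i h‖ ^ 2 := fun i =>
    integral_nonneg fun h => mul_nonneg (hqpos h).le (sq_nonneg _)
  have hbound : ∀ i : Fin d,
      ENNReal.ofReal |((∫ h, q h • s h) - ∫ h, phat h • s h) i|
        ≤ (fisherDivL q phat) ^ (2⁻¹:ℝ)
          * (ENNReal.ofReal (∫ h, q h * ‖g i h‖ ^ 2)) ^ (2⁻¹:ℝ) := by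
    intro i
    rw [hkey i]
    set u : EuclideanSpace ℝ (Fin n) → ℝ≥0∞ :=
      fun h => ENNReal.ofReal (Real.sqrt (q h) * ‖Δ h‖) with hu
    set w : EuclideanSpace ℝ (Fin n) → ℝ≥0∞ :=
      fun h => ENNReal.ofReal (Real.sqrt (q h) * ‖g i h‖) with hw
    have hum : AEMeasurable u volume :=
      (((Real.continuous_sqrt.comp hq.continuous).mul
        hΔcont.norm).measurable.ennreal_ofReal).aemeasurable
    have hwm : AEMeasurable w volume :=
      (((Real.continuous_sqrt.comp hq.continuous).mul
        (hgC i).continuous.norm).measurable.ennreal_ofReal).aemeasurable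
    have step1 : ENNReal.ofReal |∫ h, q h * ⟪Δ h, g i h⟫|
        ≤ ∫⁻ h, ENNReal.ofReal ‖q h * ⟪Δ h, g i h⟫‖ := by
      have h5 := norm_integral_le_lintegral_norm (μ := volume) (fun h => q h * ⟪Δ h, g i h⟫)
      rw [Real.norm_eq_abs] at h5
      exact le_trans (ENNReal.ofReal_le_ofReal h5) ENNReal.ofReal_toReal_le
    have step2 : (∫⁻ h, ENNReal.ofReal ‖q h * ⟪Δ h, g i h⟫‖) ≤ ∫⁻ h, (u * w) h := by
      refine lintegral_mono fun h => ?_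
      simp only [Pi.mul_apply, hu, hw]
      rw [← ENNReal.ofReal_mul (mul_nonneg (Real.sqrt_nonneg _) (norm_nonneg _))]
      refine ENNReal.ofReal_le_ofReal ?_
      rw [Real.norm_eq_abs, abs_mul, abs_of_pos (hqpos h)]
      have h2 : |⟪Δ h, g i h⟫| ≤ ‖Δ h‖ * ‖g i h‖ := abs_real_inner_le_norm _ _
      have h3 : q h = Real.sqrt (q h) * Real.sqrt (q h) := (Real.mul_self_sqrt (hqpos h).le).symm
      calc q h * |⟪Δ h, g i h⟫| ≤ q h * (‖Δ h‖ * ‖g i h‖) :=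
            mul_le_mul_of_nonneg_left h2 (hqpos h).le
        _ = Real.sqrt (q h) * ‖Δ h‖ * (Real.sqrt (q h) * ‖g i h‖) := by
            conv_lhs => rw [h3]
            ring
    have hconj : Real.HolderConjugate 2 2 := Real.HolderConjugate.two_two
    have step3 := ENNReal.lintegral_mul_le_Lp_mul_Lq volume hconj hum hwm
    have hu2 : (∫⁻ h, u h ^ (2:ℝ)) = fisherDivL q phat := by
      unfold fisherDivL
      congr 1
      funext h
      rw [hu, ENNReal.ofReal_rpow_of_nonneg
        (mul_nonneg (Real.sqrt_nonneg _) (norm_nonneg _)) (by norm_num)]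
      congr 1
      rw [show ((2:ℝ)) = ((2:ℕ):ℝ) by norm_num, Real.rpow_natCast]
      rw [mul_pow, Real.sq_sqrt (hqpos h).le]
      congr 2
      rw [hΔdef]
      simp only
      rw [norm_sub_rev]
    have hw2 : (∫⁻ h, w h ^ (2:ℝ)) = ENNReal.ofReal (∫ h, q h * ‖g i h‖ ^ 2) := by
      rw [MeasureTheory.ofReal_integral_eq_lintegral_ofReal (hkfin i)
        (Filter.Eventually.of_forall fun h => mul_nonneg (hqpos h).le (sq_nonneg _))]
      congr 1
      funext h
      rw [hw, ENNReal.ofReal_rpow_of_nonneg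
        (mul_nonneg (Real.sqrt_nonneg _) (norm_nonneg _)) (by norm_num)]
      congr 1
      rw [show ((2:ℝ)) = ((2:ℕ):ℝ) by norm_num, Real.rpow_natCast]
      rw [mul_pow, Real.sq_sqrt (hqpos h).le]
    calc ENNReal.ofReal |∫ h, q h * ⟪Δ h, g i h⟫|
        ≤ ∫⁻ h, (u * w) h := le_trans step1 step2
      _ ≤ (∫⁻ h, u h ^ (2:ℝ)) ^ (1/(2:ℝ)) * (∫⁻ h, w h ^ (2:ℝ)) ^ (1/(2:ℝ)) := step3
      _ = (fisherDivL q phat) ^ (2⁻¹:ℝ)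
          * (ENNReal.ofReal (∫ h, q h * ‖g i h‖ ^ 2)) ^ (2⁻¹:ℝ) := by
          rw [hu2, hw2]
          norm_num
  set B := (∫ h, q h • s h) - ∫ h, phat h • s h with hB
  have hnormB : ‖B‖ ^ 2 = ∑ i, |B i| ^ 2 := by
    rw [EuclideanSpace.norm_eq, Real.sq_sqrt (Finset.sum_nonneg fun i _ => sq_nonneg _)]
    simp [sq_abs, Real.norm_eq_abs]
  set S : ℝ := ∑ i, ∫ h, q h * ‖g i h‖ ^ 2 with hS
  have hSnn : (0:ℝ) ≤ S := Finset.sum_nonneg fun i _ => hAnn i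
  have h2 : ((‖B‖₊ : ℝ≥0∞)) ^ (2:ℝ) ≤ fisherDivL q phat * ENNReal.ofReal S := by
    have e1 : ((‖B‖₊ : ℝ≥0∞)) ^ (2:ℝ) = ENNReal.ofReal (‖B‖ ^ 2) := by
      rw [← enorm_eq_nnnorm, ← ofReal_norm, ENNReal.ofReal_rpow_of_nonneg (norm_nonneg _) (by norm_num)]
      congr 1
      rw [show ((2:ℝ)) = ((2:ℕ):ℝ) by norm_num, Real.rpow_natCast]
    rw [e1, hnormB, ENNReal.ofReal_sum_of_nonneg (fun i _ => sq_nonneg _)]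
    calc ∑ i, ENNReal.ofReal (|B i| ^ 2)
        = ∑ i, (ENNReal.ofReal |B i|) ^ (2:ℝ) := by
          refine Finset.sum_congr rfl fun i _ => ?_
          rw [ENNReal.ofReal_rpow_of_nonneg (abs_nonneg _) (by norm_num)]
          congr 1
          rw [show ((2:ℝ)) = ((2:ℕ):ℝ) by norm_num, Real.rpow_natCast]
      _ ≤ ∑ i, ((fisherDivL q phat) ^ (2⁻¹:ℝ)
            * (ENNReal.ofReal (∫ h, q h * ‖g i h‖ ^ 2)) ^ (2⁻¹:ℝ)) ^ (2:ℝ) :=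
          Finset.sum_le_sum fun i _ => ENNReal.rpow_le_rpow (hbound i) (by norm_num)
      _ = ∑ i, fisherDivL q phat * ENNReal.ofReal (∫ h, q h * ‖g i h‖ ^ 2) := by
          refine Finset.sum_congr rfl fun i _ => ?_
          rw [ENNReal.mul_rpow_of_nonneg _ _ (by norm_num : (0:ℝ) ≤ 2),
            ← ENNReal.rpow_mul, ← ENNReal.rpow_mul]
          norm_num
      _ = fisherDivL q phat * ∑ i, ENNReal.ofReal (∫ h, q h * ‖g i h‖ ^ 2) :=
          (Finset.mul_sum _ _ _).symm
      _ = fisherDivL q phat * ENNReal.ofReal S := by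
          rw [hS, ENNReal.ofReal_sum_of_nonneg (fun i _ => hAnn i)]
  have h3 : (‖B‖₊ : ℝ≥0∞) = (((‖B‖₊ : ℝ≥0∞)) ^ (2:ℝ)) ^ (2⁻¹:ℝ) := by
    rw [← ENNReal.rpow_mul]
    norm_num
  rw [h3]
  calc (((‖B‖₊ : ℝ≥0∞)) ^ (2:ℝ)) ^ (2⁻¹:ℝ)
      ≤ (fisherDivL q phat * ENNReal.ofReal S) ^ (2⁻¹:ℝ) :=
        ENNReal.rpow_le_rpow h2 (by norm_num)
    _ = (fisherDivL q phat) ^ (2⁻¹:ℝ) * (ENNReal.ofReal S) ^ (2⁻¹:ℝ) :=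
        ENNReal.mul_rpow_of_nonneg _ _ (by norm_num)
    _ = ENNReal.ofReal (Real.sqrt S) * (fisherDivL q phat) ^ (2⁻¹:ℝ) := by
        rw [ENNReal.ofReal_rpow_of_nonneg hSnn (by norm_num), mul_comm]
        congr 1
        rw [Real.sqrt_eq_rpow]
        norm_num

end Aux

/-- **Bias of VaES, Fisher version.** Let `p̃(v,h) > 0` with `h ↦ p̃(v,h)` of class `C¹` and
`Z(v) = ∫ p̃(v,h) dh ∈ (0,∞)`, and let `p(h|v) = p̃(v,h)/Z(v)` be the posterior. If each
component `i` of `∇_v log p̃(v,·)` admits a `C¹` Stein solution `g i` w.r.t. `p(·|v)`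
(with `q·(g i) → 0` at infinity and `∇·(q (g i))` integrable), and
`κ = √(Σᵢ ∫ q‖g i‖²) < ∞`, then
`‖E_q[∇_v log p̃(v,h)] − E_{p(h|v)}[∇_v log p̃(v,h)]‖₂ ≤ κ · √(F(q ‖ p(·|v)))`. -/
theorem vaes_bias_le_sqrt_fisher {d n : ℕ}
    (ptilde : EuclideanSpace ℝ (Fin d) → EuclideanSpace ℝ (Fin n) → ℝ)
    (hpc : ∀ v, ContDiff ℝ 1 (ptilde v))
    (hpos : ∀ v h, 0 < ptilde v h)
    (hint : ∀ v, Integrable (ptilde v))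
    (hZpos : ∀ v, 0 < ∫ h, ptilde v h)
    (q : EuclideanSpace ℝ (Fin n) → ℝ)
    (hq : ContDiff ℝ 1 q) (hqpos : ∀ h, 0 < q h) (hqnorm : ∫ h, q h = 1)
    (v : EuclideanSpace ℝ (Fin d))
    (g : Fin d → EuclideanSpace ℝ (Fin n) → EuclideanSpace ℝ (Fin n))
    (hgC : ∀ i, ContDiff ℝ 1 (g i))
    (hstein : ∀ i h, steinOp (fun h' => ptilde v h' / ∫ h'', ptilde v h'') (g i) h
        = gradient (fun w => Real.log (ptilde w h)) v i
          - ∫ h', (ptilde v h' / ∫ h'', ptilde v h'') *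
              gradient (fun w => Real.log (ptilde w h')) v i)
    (hdecay : ∀ i, Tendsto (fun h => q h • g i h)
      (cocompact (EuclideanSpace ℝ (Fin n))) (𝓝 0))
    (hdiv : ∀ i, Integrable (vdiv fun h => q h • g i h))
    (hkfin : ∀ i, Integrable (fun h => q h * ‖g i h‖ ^ 2))
    (hq_exp : Integrable (fun h => q h • gradient (fun w => Real.log (ptilde w h)) v))
    (hp_exp : Integrable (fun h => (ptilde v h / ∫ h'', ptilde v h'') •
      gradient (fun w => Real.log (ptilde w h)) v)) :
    (‖(∫ h, q h • gradient (fun w => Real.log (ptilde w h)) v)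
        - ∫ h, (ptilde v h / ∫ h'', ptilde v h'') •
            gradient (fun w => Real.log (ptilde w h)) v‖₊ : ℝ≥0∞)
      ≤ ENNReal.ofReal (Real.sqrt (∑ i, ∫ h, q h * ‖g i h‖ ^ 2)) *
        (fisherDivL q (fun h => ptilde v h / ∫ h'', ptilde v h'')) ^ (2⁻¹ : ℝ) := by
  exact vaes_core (fun h => ptilde v h / ∫ h'', ptilde v h'')
    (fun h => gradient (fun w => Real.log (ptilde w h)) v) q hq hqpos hqnorm
    ((hpc v).div_const _) (fun h => div_pos (hpos v h) (hZpos v)) g hgC hstein hdiv hkfin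
    hq_exp hp_exp
end
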